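/- arXiv:math/0309325 — 10 statements merged into one kernel-verified Lean document; each statement's English description precedes it below -/
import Mathlib

section
/- For every i in Z/3 the following equivalences hold in SK: d_{i+1} b_{i-1} ~ b_{i-1} d_{i+1} t_i and b_{i+1} d_{i-1} ~ t_i d_{i-1} b_{i+1}, where t_i denotes the word b_{i+1} d_{i-1} d_{i+1} b_{i-1}. -/
/-- The 15-letter alphabet A = {a_i, b_i, c_i, d_i, x_i : i ∈ ℤ/3}. -/
inductive Letter : Type
  | a : ZMod 3 → Letter
  | b : ZMod 3 → Letter
  | c : ZMod 3 → Letter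
  | d : ZMod 3 → Letter
  | x : ZMod 3 → Letter
  deriving DecidableEq

/-- Words: the free monoid on the alphabet A. -/
abbrev Word := FreeMonoid Letter

def a (i : ZMod 3) : Word := FreeMonoid.of (Letter.a i)
def b (i : ZMod 3) : Word := FreeMonoid.of (Letter.b i)
def c (i : ZMod 3) : Word := FreeMonoid.of (Letter.c i)
def d (i : ZMod 3) : Word := FreeMonoid.of (Letter.d i)
def x (i : ZMod 3) : Word := FreeMonoid.of (Letter.x i)

/-- t_i = b_{i+1} d_{i-1} d_{i+1} b_{i-1}. -/
def t (i : ZMod 3) : Word := b (i+1) * d (i-1) * d (i+1) * b (i-1)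

/-- t'_i = d_{i-1} b_{i+1} b_{i-1} d_{i+1}. -/
def t' (i : ZMod 3) : Word := d (i-1) * b (i+1) * b (i-1) * d (i+1)

/-- The defining relations (1)-(10) of the semigroup SK. -/
inductive SKRel : Word → Word → Prop
  | r1a (i : ZMod 3) : SKRel (a i) (a (i+1) * d (i-1))
  | r1b (i : ZMod 3) : SKRel (b i) (a (i-1) * c (i+1))
  | r1c (i : ZMod 3) : SKRel (c i) (b (i-1) * c (i+1))
  | r1d (i : ZMod 3) : SKRel (d i) (a (i+1) * c (i-1))
  | r2 (i : ZMod 3) : SKRel (x i) (d (i+1) * x (i-1) * b (i+1))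
  | r3 : SKRel (d 0 * d 1 * d 2) 1
  | r4bd (i : ZMod 3) : SKRel (b i * d i) 1
  | r4db (i : ZMod 3) : SKRel (d i * b i) 1
  | r5d (i : ZMod 3) : SKRel (d i * x i * d i) (a i * (d i * x i * d i) * c i)
  | r5b (i : ZMod 3) : SKRel (b i * x i * b i) (a i * (b i * x i * b i) * c i)
  | r6 (i : ZMod 3) :
      SKRel (x i * (d (i+1) * d i * d (i-1))) ((d (i+1) * d i * d (i-1)) * x i)
  | r7 (i : ZMod 3) (w : Word)
      (hw : w ∈ ({c (i+1), x (i+1), b i * d (i+1) * d i} : Set Word)) :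
      SKRel ((d i * c i) * w) (w * (d i * c i))
  | r8 (i : ZMod 3) (w : Word)
      (hw : w ∈ ({a (i+1), b (i+1), c (i+1), x (i+1), b i * d (i+1) * d i} : Set Word)) :
      SKRel ((a i * b i) * w) (w * (a i * b i))
  | r9 (i : ZMod 3) (w : Word)
      (hw : w ∈ ({a i, b i, c i, x i, b (i-1) * d i * d (i-1)} : Set Word)) :
      SKRel (t i * w) (w * t i)
  | r10 (i : ZMod 3) (w : Word)
      (hw : w ∈ ({a (i+1), b (i+1), c (i+1), x (i+1), b i * d (i+1) * d i} : Set Word)) :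
      SKRel ((d i * x i * b i) * w) (w * (d i * x i * b i))

/-- The congruence generated by relations (1)-(10); `skCon u v` means u ~ v,
i.e. u and v have equal images in the presented monoid SK. -/
def skCon : Con Word := conGen SKRel

/-- (27): d_{i+1} b_{i-1} ~ b_{i-1} d_{i+1} t_i and b_{i+1} d_{i-1} ~ t_i d_{i-1} b_{i+1},
where t_i = b_{i+1} d_{i-1} d_{i+1} b_{i-1}. -/
theorem equiv_27 : ∀ i : ZMod 3,
    skCon (d (i+1) * b (i-1)) (b (i-1) * d (i+1) * t i) ∧
    skCon (b (i+1) * d (i-1)) (t i * d (i-1) * b (i+1)) := by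
  intro i
  have h1 : skCon (d (i+1) * b (i+1)) 1 := ConGen.Rel.of _ _ (SKRel.r4db _)
  have h2 : skCon (b (i-1) * d (i-1)) 1 := ConGen.Rel.of _ _ (SKRel.r4bd _)
  constructor
  · refine skCon.symm ?_
    have e1 : b (i-1) * d (i+1) * t i
        = b (i-1) * (d (i+1) * b (i+1)) * (d (i-1) * (d (i+1) * b (i-1))) := by
      simp [t, mul_assoc]
    rw [e1]
    have s1 : skCon (b (i-1) * (d (i+1) * b (i+1)) * (d (i-1) * (d (i+1) * b (i-1))))
        (b (i-1) * 1 * (d (i-1) * (d (i+1) * b (i-1)))) :=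
      skCon.mul (skCon.mul (skCon.refl _) h1) (skCon.refl _)
    refine s1.trans ?_
    have e2 : b (i-1) * 1 * (d (i-1) * (d (i+1) * b (i-1)))
        = b (i-1) * d (i-1) * (d (i+1) * b (i-1)) := by
      simp [mul_assoc]
    rw [e2]
    have s2 : skCon (b (i-1) * d (i-1) * (d (i+1) * b (i-1)))
        (1 * (d (i+1) * b (i-1))) := skCon.mul h2 (skCon.refl _)
    refine s2.trans ?_
    rw [one_mul]; exact skCon.refl _
  · refine skCon.symm ?_
    have e1 : t i * d (i-1) * b (i+1)
        = b (i+1) * d (i-1) * d (i+1) * (b (i-1) * d (i-1)) * b (i+1) := by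
      simp [t, mul_assoc]
    rw [e1]
    have s1 : skCon (b (i+1) * d (i-1) * d (i+1) * (b (i-1) * d (i-1)) * b (i+1))
        (b (i+1) * d (i-1) * d (i+1) * 1 * b (i+1)) :=
      skCon.mul (skCon.mul (skCon.refl _) h2) (skCon.refl _)
    refine s1.trans ?_
    have e2 : b (i+1) * d (i-1) * d (i+1) * 1 * b (i+1)
        = b (i+1) * d (i-1) * (d (i+1) * b (i+1)) := by simp [mul_assoc]
    rw [e2]
    have s2 : skCon (b (i+1) * d (i-1) * (d (i+1) * b (i+1)))
        (b (i+1) * d (i-1) * 1) := skCon.mul (skCon.refl _) h1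
    refine s2.trans ?_
    rw [mul_one]; exact skCon.refl _
end

section
/- For every i in Z/3 the following equivalences hold in SK: a_i ~ a_{i-1} b_{i+1}, c_i ~ d_{i+1} c_{i-1}, a_i b_i ~ a_{i-1} d_{i-1}, and d_i c_i ~ b_{i-1} c_{i-1}. -/
abbrev SK := skCon.Quotient

lemma skCon_iff_mk_eq {u v : Word} : skCon u v ↔ (u : SK) = v := (Con.eq skCon).symm

lemma SKRel.mk_eq {u v : Word} (h : SKRel u v) : (u : SK) = v :=
  (Con.eq skCon).2 (ConGen.Rel.of u v h)

lemma mk_d_mul_b (i : ZMod 3) : (d i : SK) * b i = 1 := by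
  simpa only [Con.coe_mul, Con.coe_one] using (SKRel.r4db i).mk_eq

lemma mk_b_mul_d (i : ZMod 3) : (b i : SK) * d i = 1 := by
  simpa only [Con.coe_mul, Con.coe_one] using (SKRel.r4bd i).mk_eq

/-- By (4), `d i` becomes a unit of SK, so the consequences of (3) are group computations in `SKˣ`. -/
def dUnit (i : ZMod 3) : SKˣ := ⟨d i, b i, mk_d_mul_b i, mk_b_mul_d i⟩

lemma mul_mul_eq_one_rotate {G : Type*} [Group G] {x y z : G} (h : x * y * z = 1) :
    y * z * x = 1 := by
  rwa [mul_assoc, mul_eq_one_comm] at h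

lemma dUnit_mul_mul (i : ZMod 3) : dUnit i * dUnit (i + 1) * dUnit (i - 1) = 1 := by
  have h₀ : dUnit 0 * dUnit 1 * dUnit 2 = 1 :=
    Units.ext (show ((d 0 * d 1 * d 2 : Word) : SK) = (1 : Word) from SKRel.r3.mk_eq)
  have h₁ := mul_mul_eq_one_rotate h₀
  fin_cases i
  exacts [h₀, h₁, mul_mul_eq_one_rotate h₁]

lemma dUnit_add_one_mul_dUnit_sub_one (i : ZMod 3) :
    dUnit (i + 1) * dUnit (i - 1) = (dUnit i)⁻¹ :=
  eq_inv_of_mul_eq_one_right (by rw [← mul_assoc, dUnit_mul_mul])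

lemma mk_b_eq (i : ZMod 3) : (b i : SK) = d (i + 1) * d (i - 1) :=
  congrArg Units.val (dUnit_add_one_mul_dUnit_sub_one i).symm

lemma mk_d_eq (i : ZMod 3) : (d i : SK) = b (i - 1) * b (i + 1) := by
  have h := congrArg Units.val (inv_inv (dUnit i)).symm
  rwa [← dUnit_add_one_mul_dUnit_sub_one, mul_inv_rev, Units.val_mul] at h

lemma ZMod.three_sub_one_sub_one (i : ZMod 3) : i - 1 - 1 = i + 1 := by
  revert i; decide

lemma mk_a_sub_one (i : ZMod 3) : (a (i - 1) : SK) = a i * d (i + 1) := by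
  simpa only [Con.coe_mul, sub_add_cancel, ZMod.three_sub_one_sub_one] using
    (SKRel.r1a (i - 1)).mk_eq

lemma mk_c_sub_one (i : ZMod 3) : (c (i - 1) : SK) = b (i + 1) * c i := by
  simpa only [Con.coe_mul, sub_add_cancel, ZMod.three_sub_one_sub_one] using
    (SKRel.r1c (i - 1)).mk_eq

/-- (28)-(29): a_i ~ a_{i-1} b_{i+1}, c_i ~ d_{i+1} c_{i-1},
a_i b_i ~ a_{i-1} d_{i-1}, d_i c_i ~ b_{i-1} c_{i-1}. -/
theorem equiv_28_29 : ∀ i : ZMod 3,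
    skCon (a i) (a (i-1) * b (i+1)) ∧
    skCon (c i) (d (i+1) * c (i-1)) ∧
    skCon (a i * b i) (a (i-1) * d (i-1)) ∧
    skCon (d i * c i) (b (i-1) * c (i-1)) := by
  intro i
  simp only [skCon_iff_mk_eq, Con.coe_mul]
  refine ⟨?_, ?_, ?_, ?_⟩
  · rw [mk_a_sub_one, mul_assoc, mk_d_mul_b, mul_one]
  · rw [mk_c_sub_one, ← mul_assoc, mk_d_mul_b, one_mul]
  · rw [mk_a_sub_one, mk_b_eq, mul_assoc]
  · rw [mk_c_sub_one, mk_d_eq, mul_assoc]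
end

section
/- For every i in Z/3 the following equivalences hold in SK: b_i ~ a_i b_i c_i and d_i ~ a_i d_i c_i. -/
namespace SKProof

lemma base {u v : Word} (h : SKRel u v) : skCon u v := ConGen.Rel.of u v h

lemma ctx (L R : Word) {u v : Word} (h : skCon u v) : skCon (L * u * R) (L * v * R) :=
  skCon.mul (skCon.mul (skCon.refl L) h) (skCon.refl R)

/-- rotate: d j * v ~ 1  →  v * d j ~ 1 -/
lemma rot (j : ZMod 3) (v : Word) (h : skCon (d j * v) 1) : skCon (v * d j) 1 := by
  have h1 : skCon (v * d j) (b j * (d j * v) * d j) := by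
    have h0 := ctx (1 : Word) (v * d j) ((base (SKRel.r4bd j)).symm)
    exact h0
  have h2 : skCon (b j * (d j * v) * d j) (b j * (1:Word) * d j) := ctx _ _ h
  have h3 : skCon (b j * (1:Word) * d j) 1 := base (SKRel.r4bd j)
  exact h1.trans (h2.trans h3)

lemma cyc : ∀ i : ZMod 3, skCon (d i * (d (i+1) * d (i+2))) 1 := by
  have h0 : skCon (d 0 * (d 1 * d 2)) 1 := base SKRel.r3
  have h1 : skCon ((d 1 * d 2) * d 0) 1 := rot 0 (d 1 * d 2) h0
  have h2 : skCon ((d 2 * d 0) * d 1) 1 := rot 1 (d 2 * d 0) h1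
  intro i
  have tri : i = 0 ∨ i = 1 ∨ i = 2 := by revert i; decide
  rcases tri with rfl | rfl | rfl
  · exact h0
  · have e1 : (1+1 : ZMod 3) = 2 := by decide
    have e2 : (1+2 : ZMod 3) = 0 := by decide
    rw [e1, e2]; exact h1
  · have e1 : (2+1 : ZMod 3) = 0 := by decide
    have e2 : (2+2 : ZMod 3) = 1 := by decide
    rw [e1, e2]; exact h2

end SKProof

open SKProof in
/-- (30): b_i ~ a_i b_i c_i and d_i ~ a_i d_i c_i. -/
theorem equiv_30 : ∀ i : ZMod 3,
    skCon (b i) (a i * b i * c i) ∧ skCon (d i) (a i * d i * c i) := by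
  intro i
  have h3 : (3 : ZMod 3) = 0 := by decide
  have em1 : i - 1 = i + 2 := by linear_combination -h3
  have e1 : i + 2 + 1 = i := by linear_combination h3
  have e2 : i - 1 + 1 = i := by ring
  have e3 : i - 1 - 1 = i + 1 := by linear_combination -h3
  have f1 : i + 2 - 1 = i + 1 := by ring
  -- fixed-up relation instances
  have r1a' : SKRel (a (i+2)) (a i * d (i+1)) := by
    have h := SKRel.r1a (i-1); rw [e2, e3, em1] at h; exact h
  have r1ai : SKRel (a i) (a (i+1) * d (i+2)) := by
    have h := SKRel.r1a i; rw [em1] at h; exact h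
  have r1b' : SKRel (b i) (a (i+2) * c (i+1)) := by
    have h := SKRel.r1b i; rw [em1] at h; exact h
  have r1c' : SKRel (c i) (b (i+2) * c (i+1)) := by
    have h := SKRel.r1c i; rw [em1] at h; exact h
  have r1c2 : SKRel (c (i+2)) (b (i+1) * c i) := by
    have h := SKRel.r1c (i+2); rw [f1, e1] at h; exact h
  have r1d' : SKRel (d i) (a (i+1) * c (i+2)) := by
    have h := SKRel.r1d i; rw [em1] at h; exact h
  constructor
  · -- b i ~ a i * b i * c i
    have s1 : skCon (b i) (a (i+2) * c (i+1)) := base r1b'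
    have s2 : skCon (a (i+2) * c (i+1)) (a i * d (i+1) * c (i+1)) :=
      ctx 1 (c (i+1)) (base r1a')
    have s3 : skCon (a i * d (i+1) * c (i+1))
        (a i * d (i+1) * (d (i+2) * b (i+2)) * c (i+1)) :=
      ctx (a i * d (i+1)) (c (i+1)) ((base (SKRel.r4db (i+2))).symm)
    have s4 : skCon (a i * d (i+1) * (d (i+2) * b (i+2)) * c (i+1))
        (a i * (b i * d i) * d (i+1) * (d (i+2) * b (i+2)) * c (i+1)) :=
      ctx (a i) (d (i+1) * (d (i+2) * b (i+2)) * c (i+1)) ((base (SKRel.r4bd i)).symm)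
    have s5 : skCon (a i * (b i * d i) * d (i+1) * (d (i+2) * b (i+2)) * c (i+1))
        (a i * b i * (b (i+2) * c (i+1))) :=
      ctx (a i * b i) (b (i+2) * c (i+1)) (cyc i)
    have s6 : skCon (a i * b i * (b (i+2) * c (i+1))) (a i * b i * c i) :=
      ctx (a i * b i) 1 ((base r1c').symm)
    exact s1.trans (s2.trans (s3.trans (s4.trans (s5.trans s6))))
  · -- d i ~ a i * d i * c i
    have s1 : skCon (d i) (a (i+1) * c (i+2)) := base r1d'
    have s2 : skCon (a (i+1) * c (i+2)) (a (i+1) * (b (i+1) * c i)) :=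
      ctx (a (i+1)) 1 (base r1c2)
    have s3 : skCon (a (i+1) * (b (i+1) * c i))
        (a (i+1) * b (i+1) * (b i * d i) * c i) :=
      ctx (a (i+1) * b (i+1)) (c i) ((base (SKRel.r4bd i)).symm)
    have s4 : skCon (a (i+1) * b (i+1) * (b i * d i) * c i)
        (a (i+1) * b (i+1) * b i * (d i * (d (i+1) * d (i+2))) * (d i * c i)) :=
      ctx (a (i+1) * b (i+1) * b i) (d i * c i) ((cyc i).symm)
    have s5 : skCon (a (i+1) * b (i+1) * b i * (d i * (d (i+1) * d (i+2))) * (d i * c i))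
        (a (i+1) * b (i+1) * (d (i+1) * d (i+2)) * (d i * c i)) :=
      ctx (a (i+1) * b (i+1)) (d (i+1) * d (i+2) * (d i * c i)) (base (SKRel.r4bd i))
    have s6 : skCon (a (i+1) * b (i+1) * (d (i+1) * d (i+2)) * (d i * c i))
        (a (i+1) * (d (i+2) * (d i * c i))) :=
      ctx (a (i+1)) (d (i+2) * (d i * c i)) (base (SKRel.r4bd (i+1)))
    have s7 : skCon (a (i+1) * (d (i+2) * (d i * c i))) (a i * d i * c i) :=
      ctx 1 (d i * c i) ((base r1ai).symm)
    exact s1.trans (s2.trans (s3.trans (s4.trans (s5.trans (s6.trans s7)))))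
end

section
/- For every i in Z/3 the following equivalences hold in SK: b_{i-1} x_{i+1} d_{i-1} ~ x_i and b_i x_i d_i ~ d_{i+1} x_{i+1} b_{i+1}. -/
lemma skr {u v : Word} (h : SKRel u v) : skCon u v := ConGen.Rel.of u v h

lemma mulL (w : Word) {u v : Word} (h : skCon u v) : skCon (w*u) (w*v) :=
  skCon.mul (skCon.refl w) h

lemma mulR (w : Word) {u v : Word} (h : skCon u v) : skCon (u*w) (v*w) :=
  skCon.mul h (skCon.refl w)

/-- Cyclic shifts of relation (3). -/
lemma d_cyc : ∀ i : ZMod 3, skCon (d i * d (i+1) * d (i+2)) 1 := by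
  have h0 : skCon (d 0 * d 1 * d 2) 1 := skr SKRel.r3
  have shift : ∀ i j k : ZMod 3, skCon (d i * d j * d k) 1 →
      skCon (d j * d k * d i) 1 := by
    intro i j k h
    have s1 : skCon (d j * d k * d i) (b i * d i * d j * d k * d i) :=
      (mulR (d j * d k * d i) (skr (SKRel.r4bd i))).symm
    have s2 : skCon (b i * d i * d j * d k * d i) (b i * d i) :=
      mulR (d i) (mulL (b i) h)
    have s3 : skCon (b i * d i) 1 := skr (SKRel.r4bd i)
    exact s1.trans (s2.trans s3)
  have htri : ∀ i : ZMod 3, i = 0 ∨ i = 1 ∨ i = 2 := by decide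
  intro i
  rcases htri i with h | h | h <;> subst h
  · exact h0
  · exact shift 0 1 2 h0
  · exact shift 1 2 0 (shift 0 1 2 h0)

lemma d_cyc2 (i : ZMod 3) : skCon (d (i+1) * d (i-1) * d i) 1 := by
  have e1 : ∀ j : ZMod 3, j + 1 + 1 = j - 1 := by decide
  have e2 : ∀ j : ZMod 3, j + 1 + 2 = j := by decide
  have h := d_cyc (i+1)
  rw [e1, e2] at h
  exact h

lemma P1 (i : ZMod 3) : skCon (x (i+1)) (d (i-1) * x i * b (i-1)) := by
  have e1 : ∀ j : ZMod 3, j + 1 + 1 = j - 1 := by decide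
  have e2 : ∀ j : ZMod 3, j + 1 - 1 = j := by decide
  have h := skr (SKRel.r2 (i+1))
  rw [e1, e2] at h
  exact h

lemma P2 (i : ZMod 3) : skCon (d (i+1) * d (i-1)) (b i) := by
  have s1 : skCon (d (i+1) * d (i-1)) (d (i+1) * d (i-1) * (d i * b i)) :=
    (mulL (d (i+1) * d (i-1)) (skr (SKRel.r4db i))).symm
  have s2 : skCon (d (i+1) * d (i-1) * d i * b i) (1 * b i) :=
    mulR (b i) (d_cyc2 i)
  exact s1.trans s2

lemma P3 (i : ZMod 3) : skCon (b (i-1) * b (i+1)) (d i) := by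
  have s1 : skCon (b (i-1) * b (i+1))
      (b (i-1) * b (i+1) * (d (i+1) * d (i-1) * d i)) :=
    (mulL (b (i-1) * b (i+1)) (d_cyc2 i)).symm
  have s2 : skCon (b (i-1) * (b (i+1) * d (i+1)) * (d (i-1) * d i))
      (b (i-1) * 1 * (d (i-1) * d i)) :=
    mulR (d (i-1) * d i) (mulL (b (i-1)) (skr (SKRel.r4bd (i+1))))
  have s3 : skCon (b (i-1) * d (i-1) * d i) (1 * d i) :=
    mulR (d i) (skr (SKRel.r4bd (i-1)))
  exact s1.trans (s2.trans s3)


/-- (31)-(32): b_{i-1} x_{i+1} d_{i-1} ~ x_i and b_i x_i d_i ~ d_{i+1} x_{i+1} b_{i+1}. -/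
theorem equiv_31_32 : ∀ i : ZMod 3,
    skCon (b (i-1) * x (i+1) * d (i-1)) (x i) ∧
    skCon (b i * x i * d i) (d (i+1) * x (i+1) * b (i+1)) := fun i => by
  have hbd : skCon (b (i-1) * d (i-1)) 1 := skr (SKRel.r4bd (i-1))
  constructor
  · -- b_{i-1} x_{i+1} d_{i-1} ~ x_i
    have s1 : skCon (b (i-1) * x (i+1) * d (i-1))
        (b (i-1) * (d (i-1) * x i * b (i-1)) * d (i-1)) :=
      mulR (d (i-1)) (mulL (b (i-1)) (P1 i))
    have s2 : skCon ((b (i-1) * d (i-1)) * x i * (b (i-1) * d (i-1)))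
        (1 * x i * 1) :=
      skCon.mul (skCon.mul hbd (skCon.refl (x i))) hbd
    exact s1.trans s2
  · -- b_i x_i d_i ~ d_{i+1} x_{i+1} b_{i+1}
    have s1 : skCon (d (i+1) * x (i+1) * b (i+1))
        (d (i+1) * (d (i-1) * x i * b (i-1)) * b (i+1)) :=
      mulR (b (i+1)) (mulL (d (i+1)) (P1 i))
    have s2 : skCon ((d (i+1) * d (i-1)) * x i * (b (i-1) * b (i+1)))
        (b i * x i * d i) :=
      skCon.mul (skCon.mul (P2 i) (skCon.refl (x i))) (P3 i)
    exact (s1.trans s2).symm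
end

section
/- For every i in Z/3, every word w in the set B_{i+1} satisfies (d_i c_i) w ~ w (d_i c_i) in SK, and every word w in the set B_{i-1} satisfies (b_i c_i) w ~ w (b_i c_i) in SK. -/
/-- B_j = {a_j, b_j, c_j, d_j, b_{j-1} b_j d_{j-1}, b_{j-1} d_j d_{j-1}}. -/
def Bset (j : ZMod 3) : Set Word :=
  {a j, b j, c j, d j, b (j-1) * b j * d (j-1), b (j-1) * d j * d (j-1)}
namespace SKL
private lemma skCon_of {u v : Word} (h : SKRel u v) : skCon u v := ConGen.Rel.of u v h
private def ofL : List Letter → Word := FreeMonoid.ofList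
private lemma step {l r : Word} (h : skCon l r) (p q : List Letter) :
    skCon (ofL p * l * ofL q) (ofL p * r * ofL q) :=
  ((skCon.refl (ofL p)).mul h).mul (skCon.refl (ofL q))
lemma cyc1_0 : skCon (ofL [.d 1, .d 2, .d 0]) (ofL []) :=
  (skCon.trans (step (skCon.symm (skCon_of (SKRel.r4bd 0))) [] [.d 1, .d 2, .d 0]) (skCon.trans (step (skCon_of SKRel.r3) [.b 0] [.d 0]) (step (skCon_of (SKRel.r4bd 0)) [] [])))
lemma cyc1_1 : skCon (ofL [.d 2, .d 0, .d 1]) (ofL []) :=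
  (skCon.trans (step (skCon.symm (skCon_of (SKRel.r4bd 1))) [] [.d 2, .d 0, .d 1]) (skCon.trans (step SKL.cyc1_0 [.b 1] [.d 1]) (step (skCon_of (SKRel.r4bd 1)) [] [])))
lemma cyc1_2 : skCon (ofL [.d 0, .d 1, .d 2]) (ofL []) :=
  (skCon.trans (step (skCon.symm (skCon_of (SKRel.r4bd 2))) [] [.d 0, .d 1, .d 2]) (skCon.trans (step SKL.cyc1_1 [.b 2] [.d 2]) (step (skCon_of (SKRel.r4bd 2)) [] [])))
lemma bdd_0 : skCon (ofL [.b 1]) (ofL [.d 2, .d 0]) :=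
  (skCon.trans (step (skCon.symm SKL.cyc1_0) [.b 1] []) (step (skCon_of (SKRel.r4bd 1)) [] [.d 2, .d 0]))
lemma bdd_1 : skCon (ofL [.b 2]) (ofL [.d 0, .d 1]) :=
  (skCon.trans (step (skCon.symm SKL.cyc1_1) [.b 2] []) (step (skCon_of (SKRel.r4bd 2)) [] [.d 0, .d 1]))
lemma bdd_2 : skCon (ofL [.b 0]) (ofL [.d 1, .d 2]) :=
  (skCon.trans (step (skCon.symm SKL.cyc1_2) [.b 0] []) (step (skCon_of (SKRel.r4bd 0)) [] [.d 1, .d 2]))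
lemma cdc_0 : skCon (ofL [.c 1]) (ofL [.d 2, .c 0]) :=
  (skCon.trans (step (skCon.symm (skCon_of (SKRel.r4db 2))) [] [.c 1]) (step (skCon.symm (skCon_of (SKRel.r1c 0))) [.d 2] []))
lemma cdc_1 : skCon (ofL [.c 2]) (ofL [.d 0, .c 1]) :=
  (skCon.trans (step (skCon.symm (skCon_of (SKRel.r4db 0))) [] [.c 2]) (step (skCon.symm (skCon_of (SKRel.r1c 1))) [.d 0] []))
lemma cdc_2 : skCon (ofL [.c 0]) (ofL [.d 1, .c 2]) :=
  (skCon.trans (step (skCon.symm (skCon_of (SKRel.r4db 1))) [] [.c 0]) (step (skCon.symm (skCon_of (SKRel.r1c 2))) [.d 1] []))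
lemma g33d_0 : skCon (ofL [.d 0, .c 0, .d 1]) (ofL [.d 1, .d 0, .c 0]) :=
  (skCon.trans (step (skCon_of (SKRel.r1d 1)) [.d 0, .c 0] []) (skCon.trans (step (skCon_of (SKRel.r1c 0)) [.d 0, .c 0, .a 2] []) (skCon.trans (step (skCon.symm (skCon_of (SKRel.r8 2 _ (Set.mem_insert_of_mem _ (Set.mem_insert_of_mem _ (Set.mem_insert _ _)))))) [.d 0] [.c 1]) (skCon.trans (step (skCon.symm (skCon_of (SKRel.r4bd 0))) [.d 0, .a 2, .b 2] [.c 0, .c 1]) (skCon.trans (step (skCon_of (SKRel.r8 2 _ (Set.mem_insert_of_mem _ (Set.mem_insert _ _)))) [.d 0] [.d 0, .c 0, .c 1]) (skCon.trans (step (skCon_of (SKRel.r7 0 _ (Set.mem_insert _ _))) [.d 0, .b 0, .a 2, .b 2] []) (skCon.trans (step (skCon.symm (skCon_of (SKRel.r1c 0))) [.d 0, .b 0, .a 2] [.d 0, .c 0]) (skCon.trans (step (skCon.symm (skCon_of (SKRel.r1d 1))) [.d 0, .b 0] [.d 0, .c 0]) (step (skCon_of (SKRel.r4db 0)) [] [.d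 1, .d 0, .c 0])))))))))
lemma g33d_1 : skCon (ofL [.d 1, .c 1, .d 2]) (ofL [.d 2, .d 1, .c 1]) :=
  (skCon.trans (step (skCon_of (SKRel.r1d 2)) [.d 1, .c 1] []) (skCon.trans (step (skCon_of (SKRel.r1c 1)) [.d 1, .c 1, .a 0] []) (skCon.trans (step (skCon.symm (skCon_of (SKRel.r8 0 _ (Set.mem_insert_of_mem _ (Set.mem_insert_of_mem _ (Set.mem_insert _ _)))))) [.d 1] [.c 2]) (skCon.trans (step (skCon.symm (skCon_of (SKRel.r4bd 1))) [.d 1, .a 0, .b 0] [.c 1, .c 2]) (skCon.trans (step (skCon_of (SKRel.r8 0 _ (Set.mem_insert_of_mem _ (Set.mem_insert _ _)))) [.d 1] [.d 1, .c 1, .c 2]) (skCon.trans (step (skCon_of (SKRel.r7 1 _ (Set.mem_insert _ _))) [.d 1, .b 1, .a 0, .b 0] []) (skCon.trans (step (skCon.symm (skCon_of (SKRel.r1c 1))) [.d 1, .b 1, .a 0] [.d 1, .c 1]) (skCon.trans (step (skCon.symm (skCon_of (SKRel.r1d 2))) [.d 1, .b 1] [.d 1, .c 1]) (step (skCon_of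 (SKRel.r4db 1)) [] [.d 2, .d 1, .c 1])))))))))
lemma g33d_2 : skCon (ofL [.d 2, .c 2, .d 0]) (ofL [.d 0, .d 2, .c 2]) :=
  (skCon.trans (step (skCon_of (SKRel.r1d 0)) [.d 2, .c 2] []) (skCon.trans (step (skCon_of (SKRel.r1c 2)) [.d 2, .c 2, .a 1] []) (skCon.trans (step (skCon.symm (skCon_of (SKRel.r8 1 _ (Set.mem_insert_of_mem _ (Set.mem_insert_of_mem _ (Set.mem_insert _ _)))))) [.d 2] [.c 0]) (skCon.trans (step (skCon.symm (skCon_of (SKRel.r4bd 2))) [.d 2, .a 1, .b 1] [.c 2, .c 0]) (skCon.trans (step (skCon_of (SKRel.r8 1 _ (Set.mem_insert_of_mem _ (Set.mem_insert _ _)))) [.d 2] [.d 2, .c 2, .c 0]) (skCon.trans (step (skCon_of (SKRel.r7 2 _ (Set.mem_insert _ _))) [.d 2, .b 2, .a 1, .b 1] []) (skCon.trans (step (skCon.symm (skCon_of (SKRel.r1c 2))) [.d 2, .b 2, .a 1] [.d 2, .c 2]) (skCon.trans (step (skCon.symm (skCon_of (SKRel.r1d 0))) [.d 2, .b 2] [.d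 2, .c 2]) (step (skCon_of (SKRel.r4db 2)) [] [.d 0, .d 2, .c 2])))))))))
lemma g33c_0 : skCon (ofL [.d 0, .c 0, .c 1]) (ofL [.c 1, .d 0, .c 0]) :=
  (step (skCon_of (SKRel.r7 0 _ (Set.mem_insert _ _))) [] [])
lemma g33c_1 : skCon (ofL [.d 1, .c 1, .c 2]) (ofL [.c 2, .d 1, .c 1]) :=
  (step (skCon_of (SKRel.r7 1 _ (Set.mem_insert _ _))) [] [])
lemma g33c_2 : skCon (ofL [.d 2, .c 2, .c 0]) (ofL [.c 0, .d 2, .c 2]) :=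
  (step (skCon_of (SKRel.r7 2 _ (Set.mem_insert _ _))) [] [])
lemma g33s_0 : skCon (ofL [.d 0, .c 0, .b 0, .d 1, .d 0]) (ofL [.b 0, .d 1, .d 0, .d 0, .c 0]) :=
  (step (skCon_of (SKRel.r7 0 _ (Set.mem_insert_of_mem _ (Set.mem_insert_of_mem _ rfl)))) [] [])
lemma g33s_1 : skCon (ofL [.d 1, .c 1, .b 1, .d 2, .d 1]) (ofL [.b 1, .d 2, .d 1, .d 1, .c 1]) :=
  (step (skCon_of (SKRel.r7 1 _ (Set.mem_insert_of_mem _ (Set.mem_insert_of_mem _ rfl)))) [] [])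
lemma g33s_2 : skCon (ofL [.d 2, .c 2, .b 2, .d 0, .d 2]) (ofL [.b 2, .d 0, .d 2, .d 2, .c 2]) :=
  (step (skCon_of (SKRel.r7 2 _ (Set.mem_insert_of_mem _ (Set.mem_insert_of_mem _ rfl)))) [] [])
lemma g33si_0 : skCon (ofL [.d 0, .c 0, .b 0, .b 1, .d 0]) (ofL [.b 0, .b 1, .d 0, .d 0, .c 0]) :=
  (skCon.trans (step (skCon.symm (skCon_of (SKRel.r4bd 0))) [] [.d 0, .c 0, .b 0, .b 1, .d 0]) (skCon.trans (step (skCon.symm (skCon_of (SKRel.r4bd 1))) [.b 0] [.d 0, .d 0, .c 0, .b 0, .b 1, .d 0]) (skCon.trans (step (skCon.symm (skCon_of (SKRel.r4db 0))) [.b 0, .b 1] [.d 1, .d 0, .d 0, .c 0, .b 0, .b 1, .d 0]) (skCon.trans (step (skCon.symm (skCon_of (SKRel.r7 0 _ (Set.mem_insert_of_mem _ (Set.mem_insert_of_mem _ rfl))))) [.b 0, .b 1, .d 0] [.b 0, .b 1, .d 0]) (skCon.trans (step (skCon_of (SKRel.r4db 0)) [.b 0, .b 1, .d 0, .d 0,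 .c 0, .b 0, .d 1] [.b 1, .d 0]) (skCon.trans (step (skCon_of (SKRel.r4db 1)) [.b 0, .b 1, .d 0, .d 0, .c 0, .b 0] [.d 0]) (step (skCon_of (SKRel.r4bd 0)) [.b 0, .b 1, .d 0, .d 0, .c 0] [])))))))
lemma g33si_1 : skCon (ofL [.d 1, .c 1, .b 1, .b 2, .d 1]) (ofL [.b 1, .b 2, .d 1, .d 1, .c 1]) :=
  (skCon.trans (step (skCon.symm (skCon_of (SKRel.r4bd 1))) [] [.d 1, .c 1, .b 1, .b 2, .d 1]) (skCon.trans (step (skCon.symm (skCon_of (SKRel.r4bd 2))) [.b 1] [.d 1, .d 1, .c 1, .b 1, .b 2, .d 1]) (skCon.trans (step (skCon.symm (skCon_of (SKRel.r4db 1))) [.b 1, .b 2] [.d 2, .d 1, .d 1, .c 1, .b 1, .b 2, .d 1]) (skCon.trans (step (skCon.symm (skCon_of (SKRel.r7 1 _ (Set.mem_insert_of_mem _ (Set.mem_insert_of_mem _ rfl))))) [.b 1, .b 2, .d 1] [.b 1, .b 2, .d 1]) (skCon.trans (step (skCon_of (SKRel.r4db 1)) [.b 1, .b 2, .d 1, .d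 1, .c 1, .b 1, .d 2] [.b 2, .d 1]) (skCon.trans (step (skCon_of (SKRel.r4db 2)) [.b 1, .b 2, .d 1, .d 1, .c 1, .b 1] [.d 1]) (step (skCon_of (SKRel.r4bd 1)) [.b 1, .b 2, .d 1, .d 1, .c 1] [])))))))
lemma g33si_2 : skCon (ofL [.d 2, .c 2, .b 2, .b 0, .d 2]) (ofL [.b 2, .b 0, .d 2, .d 2, .c 2]) :=
  (skCon.trans (step (skCon.symm (skCon_of (SKRel.r4bd 2))) [] [.d 2, .c 2, .b 2, .b 0, .d 2]) (skCon.trans (step (skCon.symm (skCon_of (SKRel.r4bd 0))) [.b 2] [.d 2, .d 2, .c 2, .b 2, .b 0, .d 2]) (skCon.trans (step (skCon.symm (skCon_of (SKRel.r4db 2))) [.b 2, .b 0] [.d 0, .d 2, .d 2, .c 2, .b 2, .b 0, .d 2]) (skCon.trans (step (skCon.symm (skCon_of (SKRel.r7 2 _ (Set.mem_insert_of_mem _ (Set.mem_insert_of_mem _ rfl))))) [.b 2, .b 0, .d 2] [.b 2, .b 0, .d 2]) (skCon.trans (step (skCon_of (SKRel.r4db 2)) [.b 2, .b 0, .d 2,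 .d 2, .c 2, .b 2, .d 0] [.b 0, .d 2]) (skCon.trans (step (skCon_of (SKRel.r4db 0)) [.b 2, .b 0, .d 2, .d 2, .c 2, .b 2] [.d 2]) (step (skCon_of (SKRel.r4bd 2)) [.b 2, .b 0, .d 2, .d 2, .c 2] [])))))))
lemma g34b_0 : skCon (ofL [.b 0, .c 0, .b 2]) (ofL [.b 2, .b 0, .c 0]) :=
  (skCon.trans (step (skCon.symm (skCon_of (SKRel.r4bd 2))) [] [.b 0, .c 0, .b 2]) (skCon.trans (step SKL.bdd_2 [.b 2, .d 2] [.c 0, .b 2]) (skCon.trans (step (skCon.symm SKL.cdc_0) [.b 2, .d 2, .d 1] [.b 2]) (skCon.trans (step (skCon.symm SKL.g33d_1) [.b 2] [.b 2]) (skCon.trans (step SKL.cdc_0 [.b 2, .d 1] [.d 2, .b 2]) (skCon.trans (step (skCon.symm SKL.bdd_2) [.b 2] [.c 0, .d 2, .b 2]) (step (skCon_of (SKRel.r4db 2)) [.b 2, .b 0, .c 0] [])))))))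
lemma g34b_1 : skCon (ofL [.b 1, .c 1, .b 0]) (ofL [.b 0, .b 1, .c 1]) :=
  (skCon.trans (step (skCon.symm (skCon_of (SKRel.r4bd 0))) [] [.b 1, .c 1, .b 0]) (skCon.trans (step SKL.bdd_0 [.b 0, .d 0] [.c 1, .b 0]) (skCon.trans (step (skCon.symm SKL.cdc_1) [.b 0, .d 0, .d 2] [.b 0]) (skCon.trans (step (skCon.symm SKL.g33d_2) [.b 0] [.b 0]) (skCon.trans (step SKL.cdc_1 [.b 0, .d 2] [.d 0, .b 0]) (skCon.trans (step (skCon.symm SKL.bdd_0) [.b 0] [.c 1, .d 0, .b 0]) (step (skCon_of (SKRel.r4db 0)) [.b 0, .b 1, .c 1] [])))))))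
lemma g34b_2 : skCon (ofL [.b 2, .c 2, .b 1]) (ofL [.b 1, .b 2, .c 2]) :=
  (skCon.trans (step (skCon.symm (skCon_of (SKRel.r4bd 1))) [] [.b 2, .c 2, .b 1]) (skCon.trans (step SKL.bdd_1 [.b 1, .d 1] [.c 2, .b 1]) (skCon.trans (step (skCon.symm SKL.cdc_2) [.b 1, .d 1, .d 0] [.b 1]) (skCon.trans (step (skCon.symm SKL.g33d_0) [.b 1] [.b 1]) (skCon.trans (step SKL.cdc_2 [.b 1, .d 0] [.d 1, .b 1]) (skCon.trans (step (skCon.symm SKL.bdd_1) [.b 1] [.c 2, .d 1, .b 1]) (step (skCon_of (SKRel.r4db 1)) [.b 1, .b 2, .c 2] [])))))))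
lemma g34c_0 : skCon (ofL [.b 0, .c 0, .c 2]) (ofL [.c 2, .b 0, .c 0]) :=
  (skCon.trans (step SKL.bdd_2 [] [.c 0, .c 2]) (skCon.trans (step (skCon.symm SKL.cdc_0) [.d 1] [.c 2]) (skCon.trans (step (skCon_of (SKRel.r7 1 _ (Set.mem_insert _ _))) [] []) (skCon.trans (step SKL.cdc_0 [.c 2, .d 1] []) (step (skCon.symm SKL.bdd_2) [.c 2] [.c 0])))))
lemma g34c_1 : skCon (ofL [.b 1, .c 1, .c 0]) (ofL [.c 0, .b 1, .c 1]) :=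
  (skCon.trans (step SKL.bdd_0 [] [.c 1, .c 0]) (skCon.trans (step (skCon.symm SKL.cdc_1) [.d 2] [.c 0]) (skCon.trans (step (skCon_of (SKRel.r7 2 _ (Set.mem_insert _ _))) [] []) (skCon.trans (step SKL.cdc_1 [.c 0, .d 2] []) (step (skCon.symm SKL.bdd_0) [.c 0] [.c 1])))))
lemma g34c_2 : skCon (ofL [.b 2, .c 2, .c 1]) (ofL [.c 1, .b 2, .c 2]) :=
  (skCon.trans (step SKL.bdd_1 [] [.c 2, .c 1]) (skCon.trans (step (skCon.symm SKL.cdc_2) [.d 0] [.c 1]) (skCon.trans (step (skCon_of (SKRel.r7 0 _ (Set.mem_insert _ _))) [] []) (skCon.trans (step SKL.cdc_2 [.c 1, .d 0] []) (step (skCon.symm SKL.bdd_1) [.c 1] [.c 2])))))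
lemma g34d_0 : skCon (ofL [.b 0, .c 0, .d 2]) (ofL [.d 2, .b 0, .c 0]) :=
  (skCon.trans (step (skCon.symm (skCon_of (SKRel.r4db 2))) [] [.b 0, .c 0, .d 2]) (skCon.trans (step (skCon.symm SKL.g34b_0) [.d 2] [.d 2]) (step (skCon_of (SKRel.r4bd 2)) [.d 2, .b 0, .c 0] [])))
lemma g34d_1 : skCon (ofL [.b 1, .c 1, .d 0]) (ofL [.d 0, .b 1, .c 1]) :=
  (skCon.trans (step (skCon.symm (skCon_of (SKRel.r4db 0))) [] [.b 1, .c 1, .d 0]) (skCon.trans (step (skCon.symm SKL.g34b_1) [.d 0] [.d 0]) (step (skCon_of (SKRel.r4bd 0)) [.d 0, .b 1, .c 1] [])))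
lemma g34d_2 : skCon (ofL [.b 2, .c 2, .d 1]) (ofL [.d 1, .b 2, .c 2]) :=
  (skCon.trans (step (skCon.symm (skCon_of (SKRel.r4db 1))) [] [.b 2, .c 2, .d 1]) (skCon.trans (step (skCon.symm SKL.g34b_2) [.d 1] [.d 1]) (step (skCon_of (SKRel.r4bd 1)) [.d 1, .b 2, .c 2] [])))
lemma g34s_0 : skCon (ofL [.b 0, .c 0, .b 1, .d 2, .d 1]) (ofL [.b 1, .d 2, .d 1, .b 0, .c 0]) :=
  (skCon.trans (step (skCon.symm (skCon_of (SKRel.r4bd 2))) [.b 0, .c 0, .b 1, .d 2, .d 1] []) (skCon.trans (step (skCon.symm (skCon_of (SKRel.r9 0 _ (Set.mem_insert_of_mem _ (Set.mem_insert_of_mem _ (Set.mem_insert _ _)))))) [.b 0] [.d 2]) (skCon.trans (step (skCon.symm (skCon_of (SKRel.r9 0 _ (Set.mem_insert_of_mem _ (Set.mem_insert _ _))))) [] [.c 0, .d 2]) (skCon.trans (step SKL.g34d_0 [.b 1, .d 2, .d 1, .b 2] []) (step (skCon_of (SKRel.r4bd 2)) [.b 1, .d 2, .d 1] [.b 0,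 .c 0])))))
lemma g34s_1 : skCon (ofL [.b 1, .c 1, .b 2, .d 0, .d 2]) (ofL [.b 2, .d 0, .d 2, .b 1, .c 1]) :=
  (skCon.trans (step (skCon.symm (skCon_of (SKRel.r4bd 0))) [.b 1, .c 1, .b 2, .d 0, .d 2] []) (skCon.trans (step (skCon.symm (skCon_of (SKRel.r9 1 _ (Set.mem_insert_of_mem _ (Set.mem_insert_of_mem _ (Set.mem_insert _ _)))))) [.b 1] [.d 0]) (skCon.trans (step (skCon.symm (skCon_of (SKRel.r9 1 _ (Set.mem_insert_of_mem _ (Set.mem_insert _ _))))) [] [.c 1, .d 0]) (skCon.trans (step SKL.g34d_1 [.b 2, .d 0, .d 2, .b 0] []) (step (skCon_of (SKRel.r4bd 0)) [.b 2, .d 0, .d 2] [.b 1, .c 1])))))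
lemma g34s_2 : skCon (ofL [.b 2, .c 2, .b 0, .d 1, .d 0]) (ofL [.b 0, .d 1, .d 0, .b 2, .c 2]) :=
  (skCon.trans (step (skCon.symm (skCon_of (SKRel.r4bd 1))) [.b 2, .c 2, .b 0, .d 1, .d 0] []) (skCon.trans (step (skCon.symm (skCon_of (SKRel.r9 2 _ (Set.mem_insert_of_mem _ (Set.mem_insert_of_mem _ (Set.mem_insert _ _)))))) [.b 2] [.d 1]) (skCon.trans (step (skCon.symm (skCon_of (SKRel.r9 2 _ (Set.mem_insert_of_mem _ (Set.mem_insert _ _))))) [] [.c 2, .d 1]) (skCon.trans (step SKL.g34d_2 [.b 0, .d 1, .d 0, .b 1] []) (step (skCon_of (SKRel.r4bd 1)) [.b 0, .d 1, .d 0] [.b 2, .c 2])))))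
lemma g34si_0 : skCon (ofL [.b 0, .c 0, .b 1, .b 2, .d 1]) (ofL [.b 1, .b 2, .d 1, .b 0, .c 0]) :=
  (skCon.trans (step SKL.bdd_2 [] [.c 0, .b 1, .b 2, .d 1]) (skCon.trans (step (skCon.symm SKL.cdc_0) [.d 1] [.b 1, .b 2, .d 1]) (skCon.trans (step SKL.g33si_1 [] []) (skCon.trans (step SKL.cdc_0 [.b 1, .b 2, .d 1, .d 1] []) (step (skCon.symm SKL.bdd_2) [.b 1, .b 2, .d 1] [.c 0])))))
lemma g34si_1 : skCon (ofL [.b 1, .c 1, .b 2, .b 0, .d 2]) (ofL [.b 2, .b 0, .d 2, .b 1, .c 1]) :=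
  (skCon.trans (step SKL.bdd_0 [] [.c 1, .b 2, .b 0, .d 2]) (skCon.trans (step (skCon.symm SKL.cdc_1) [.d 2] [.b 2, .b 0, .d 2]) (skCon.trans (step SKL.g33si_2 [] []) (skCon.trans (step SKL.cdc_1 [.b 2, .b 0, .d 2, .d 2] []) (step (skCon.symm SKL.bdd_0) [.b 2, .b 0, .d 2] [.c 1])))))
lemma g34si_2 : skCon (ofL [.b 2, .c 2, .b 0, .b 1, .d 0]) (ofL [.b 0, .b 1, .d 0, .b 2, .c 2]) :=
  (skCon.trans (step SKL.bdd_1 [] [.c 2, .b 0, .b 1, .d 0]) (skCon.trans (step (skCon.symm SKL.cdc_2) [.d 0] [.b 0, .b 1, .d 0]) (skCon.trans (step SKL.g33si_0 [] []) (skCon.trans (step SKL.cdc_2 [.b 0, .b 1, .d 0, .d 0] []) (step (skCon.symm SKL.bdd_1) [.b 0, .b 1, .d 0] [.c 2])))))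
lemma g33b_0 : skCon (ofL [.d 0, .c 0, .b 1]) (ofL [.b 1, .d 0, .c 0]) :=
  (skCon.trans (step (skCon.symm (skCon_of (SKRel.r4bd 1))) [] [.d 0, .c 0, .b 1]) (skCon.trans (step (skCon.symm SKL.g33d_0) [.b 1] [.b 1]) (step (skCon_of (SKRel.r4db 1)) [.b 1, .d 0, .c 0] [])))
lemma g33b_1 : skCon (ofL [.d 1, .c 1, .b 2]) (ofL [.b 2, .d 1, .c 1]) :=
  (skCon.trans (step (skCon.symm (skCon_of (SKRel.r4bd 2))) [] [.d 1, .c 1, .b 2]) (skCon.trans (step (skCon.symm SKL.g33d_1) [.b 2] [.b 2]) (step (skCon_of (SKRel.r4db 2)) [.b 2, .d 1, .c 1] [])))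
lemma g33b_2 : skCon (ofL [.d 2, .c 2, .b 0]) (ofL [.b 0, .d 2, .c 2]) :=
  (skCon.trans (step (skCon.symm (skCon_of (SKRel.r4bd 0))) [] [.d 2, .c 2, .b 0]) (skCon.trans (step (skCon.symm SKL.g33d_2) [.b 0] [.b 0]) (step (skCon_of (SKRel.r4db 0)) [.b 0, .d 2, .c 2] [])))
lemma cnv_d2_0 : skCon (ofL [.d 2]) (ofL [.b 1, .b 0]) :=
  (skCon.trans (step (skCon.symm (skCon_of (SKRel.r4db 0))) [.d 2] []) (step (skCon.symm SKL.bdd_0) [] [.b 0]))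
lemma cnv_d2_1 : skCon (ofL [.d 0]) (ofL [.b 2, .b 1]) :=
  (skCon.trans (step (skCon.symm (skCon_of (SKRel.r4db 1))) [.d 0] []) (step (skCon.symm SKL.bdd_1) [] [.b 1]))
lemma cnv_d2_2 : skCon (ofL [.d 1]) (ofL [.b 0, .b 2]) :=
  (skCon.trans (step (skCon.symm (skCon_of (SKRel.r4db 2))) [.d 1] []) (step (skCon.symm SKL.bdd_2) [] [.b 2]))
lemma L0ui_0 : skCon (ofL [.c 0, .b 0]) (ofL [.b 0, .d 1, .d 0, .d 0, .b 1, .b 0, .b 0, .c 0]) :=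
  (skCon.trans (step SKL.bdd_2 [.c 0] []) (skCon.trans (step (skCon.symm (skCon_of (SKRel.r4bd 0))) [] [.c 0, .d 1, .d 2]) (skCon.trans (step SKL.g33d_0 [.b 0] [.d 2]) (skCon.trans (step (skCon.symm (skCon_of (SKRel.r4db 0))) [.b 0, .d 1, .d 0] [.c 0, .d 2]) (skCon.trans (step SKL.g34d_0 [.b 0, .d 1, .d 0, .d 0] []) (step SKL.cnv_d2_0 [.b 0, .d 1, .d 0, .d 0] [.b 0, .c 0]))))))
lemma L0ui_1 : skCon (ofL [.c 1, .b 1]) (ofL [.b 1, .d 2, .d 1, .d 1, .b 2, .b 1, .b 1, .c 1]) :=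
  (skCon.trans (step SKL.bdd_0 [.c 1] []) (skCon.trans (step (skCon.symm (skCon_of (SKRel.r4bd 1))) [] [.c 1, .d 2, .d 0]) (skCon.trans (step SKL.g33d_1 [.b 1] [.d 0]) (skCon.trans (step (skCon.symm (skCon_of (SKRel.r4db 1))) [.b 1, .d 2, .d 1] [.c 1, .d 0]) (skCon.trans (step SKL.g34d_1 [.b 1, .d 2, .d 1, .d 1] []) (step SKL.cnv_d2_1 [.b 1, .d 2, .d 1, .d 1] [.b 1, .c 1]))))))
lemma L0ui_2 : skCon (ofL [.c 2, .b 2]) (ofL [.b 2, .d 0, .d 2, .d 2, .b 0, .b 2, .b 2, .c 2]) :=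
  (skCon.trans (step SKL.bdd_1 [.c 2] []) (skCon.trans (step (skCon.symm (skCon_of (SKRel.r4bd 2))) [] [.c 2, .d 0, .d 1]) (skCon.trans (step SKL.g33d_2 [.b 2] [.d 1]) (skCon.trans (step (skCon.symm (skCon_of (SKRel.r4db 2))) [.b 2, .d 0, .d 2] [.c 2, .d 1]) (skCon.trans (step SKL.g34d_2 [.b 2, .d 0, .d 2, .d 2] []) (step SKL.cnv_d2_2 [.b 2, .d 0, .d 2, .d 2] [.b 2, .c 2]))))))
lemma L0vi_0 : skCon (ofL [.c 0, .b 1]) (ofL [.b 0, .b 1, .d 0, .c 0]) :=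
  (skCon.trans (step (skCon.symm (skCon_of (SKRel.r4bd 0))) [] [.c 0, .b 1]) (step SKL.g33b_0 [.b 0] []))
lemma L0vi_1 : skCon (ofL [.c 1, .b 2]) (ofL [.b 1, .b 2, .d 1, .c 1]) :=
  (skCon.trans (step (skCon.symm (skCon_of (SKRel.r4bd 1))) [] [.c 1, .b 2]) (step SKL.g33b_1 [.b 1] []))
lemma L0vi_2 : skCon (ofL [.c 2, .b 0]) (ofL [.b 2, .b 0, .d 2, .c 2]) :=
  (skCon.trans (step (skCon.symm (skCon_of (SKRel.r4bd 2))) [] [.c 2, .b 0]) (step SKL.g33b_2 [.b 2] []))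
lemma AD0_0 : skCon (ofL [.d 1, .a 0]) (ofL [.a 0, .b 0, .d 1, .d 0]) :=
  (skCon.trans (step (skCon.symm (skCon_of (SKRel.r4bd 0))) [.d 1, .a 0] []) (skCon.trans (step (skCon.symm (skCon_of (SKRel.r4bd 1))) [.d 1, .a 0, .b 0] [.d 0]) (skCon.trans (step (skCon_of (SKRel.r8 0 _ (Set.mem_insert_of_mem _ (Set.mem_insert _ _)))) [.d 1] [.d 1, .d 0]) (step (skCon_of (SKRel.r4db 1)) [] [.a 0, .b 0, .d 1, .d 0]))))
lemma AD0_1 : skCon (ofL [.d 2, .a 1]) (ofL [.a 1, .b 1, .d 2, .d 1]) :=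
  (skCon.trans (step (skCon.symm (skCon_of (SKRel.r4bd 1))) [.d 2, .a 1] []) (skCon.trans (step (skCon.symm (skCon_of (SKRel.r4bd 2))) [.d 2, .a 1, .b 1] [.d 1]) (skCon.trans (step (skCon_of (SKRel.r8 1 _ (Set.mem_insert_of_mem _ (Set.mem_insert _ _)))) [.d 2] [.d 2, .d 1]) (step (skCon_of (SKRel.r4db 2)) [] [.a 1, .b 1, .d 2, .d 1]))))
lemma AD0_2 : skCon (ofL [.d 0, .a 2]) (ofL [.a 2, .b 2, .d 0, .d 2]) :=
  (skCon.trans (step (skCon.symm (skCon_of (SKRel.r4bd 2))) [.d 0, .a 2] []) (skCon.trans (step (skCon.symm (skCon_of (SKRel.r4bd 0))) [.d 0, .a 2, .b 2] [.d 2]) (skCon.trans (step (skCon_of (SKRel.r8 2 _ (Set.mem_insert_of_mem _ (Set.mem_insert _ _)))) [.d 0] [.d 0, .d 2]) (step (skCon_of (SKRel.r4db 0)) [] [.a 2, .b 2, .d 0, .d 2]))))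
lemma ABb0_0 : skCon (ofL [.b 1, .a 0]) (ofL [.a 0, .b 0, .b 1, .d 0]) :=
  (skCon.trans (step (skCon.symm (skCon_of (SKRel.r4bd 0))) [.b 1, .a 0] []) (step (skCon.symm (skCon_of (SKRel.r8 0 _ (Set.mem_insert_of_mem _ (Set.mem_insert _ _))))) [] [.d 0]))
lemma ABb0_1 : skCon (ofL [.b 2, .a 1]) (ofL [.a 1, .b 1, .b 2, .d 1]) :=
  (skCon.trans (step (skCon.symm (skCon_of (SKRel.r4bd 1))) [.b 2, .a 1] []) (step (skCon.symm (skCon_of (SKRel.r8 1 _ (Set.mem_insert_of_mem _ (Set.mem_insert _ _))))) [] [.d 1]))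
lemma ABb0_2 : skCon (ofL [.b 0, .a 2]) (ofL [.a 2, .b 2, .b 0, .d 2]) :=
  (skCon.trans (step (skCon.symm (skCon_of (SKRel.r4bd 2))) [.b 0, .a 2] []) (step (skCon.symm (skCon_of (SKRel.r8 2 _ (Set.mem_insert_of_mem _ (Set.mem_insert _ _))))) [] [.d 2]))
lemma STAR0_0 : skCon (ofL [.c 2, .a 0, .d 0]) (ofL [.a 0, .d 0, .c 2]) :=
  (skCon.trans (step (skCon_of (SKRel.r1a 0)) [.c 2] [.d 0]) (skCon.trans (step (skCon.symm SKL.bdd_0) [.c 2, .a 1] []) (skCon.trans (step (skCon.symm (skCon_of (SKRel.r8 1 _ (Set.mem_insert_of_mem _ (Set.mem_insert_of_mem _ (Set.mem_insert _ _)))))) [] []) (skCon.trans (step SKL.bdd_0 [.a 1] [.c 2]) (step (skCon.symm (skCon_of (SKRel.r1a 0))) [] [.d 0, .c 2])))))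
lemma STAR0_1 : skCon (ofL [.c 0, .a 1, .d 1]) (ofL [.a 1, .d 1, .c 0]) :=
  (skCon.trans (step (skCon_of (SKRel.r1a 1)) [.c 0] [.d 1]) (skCon.trans (step (skCon.symm SKL.bdd_1) [.c 0, .a 2] []) (skCon.trans (step (skCon.symm (skCon_of (SKRel.r8 2 _ (Set.mem_insert_of_mem _ (Set.mem_insert_of_mem _ (Set.mem_insert _ _)))))) [] []) (skCon.trans (step SKL.bdd_1 [.a 2] [.c 0]) (step (skCon.symm (skCon_of (SKRel.r1a 1))) [] [.d 1, .c 0])))))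
lemma STAR0_2 : skCon (ofL [.c 1, .a 2, .d 2]) (ofL [.a 2, .d 2, .c 1]) :=
  (skCon.trans (step (skCon_of (SKRel.r1a 2)) [.c 1] [.d 2]) (skCon.trans (step (skCon.symm SKL.bdd_2) [.c 1, .a 0] []) (skCon.trans (step (skCon.symm (skCon_of (SKRel.r8 0 _ (Set.mem_insert_of_mem _ (Set.mem_insert_of_mem _ (Set.mem_insert _ _)))))) [] []) (skCon.trans (step SKL.bdd_2 [.a 0] [.c 1]) (step (skCon.symm (skCon_of (SKRel.r1a 2))) [] [.d 2, .c 1])))))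
lemma R1A1_0 : skCon (ofL [.a 1]) (ofL [.a 2, .d 0]) :=
  (step (skCon_of (SKRel.r1a 1)) [] [])
lemma R1A1_1 : skCon (ofL [.a 2]) (ofL [.a 0, .d 1]) :=
  (step (skCon_of (SKRel.r1a 2)) [] [])
lemma R1A1_2 : skCon (ofL [.a 0]) (ofL [.a 1, .d 2]) :=
  (step (skCon_of (SKRel.r1a 0)) [] [])
lemma AD2_0 : skCon (ofL [.d 0, .a 2]) (ofL [.a 2, .d 0, .d 1, .d 0, .b 1, .b 0]) :=
  (skCon.trans (step SKL.AD0_2 [] []) (skCon.trans (step SKL.bdd_1 [.a 2] [.d 0, .d 2]) (step SKL.cnv_d2_0 [.a 2, .d 0, .d 1, .d 0] [])))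
lemma AD2_1 : skCon (ofL [.d 1, .a 0]) (ofL [.a 0, .d 1, .d 2, .d 1, .b 2, .b 1]) :=
  (skCon.trans (step SKL.AD0_0 [] []) (skCon.trans (step SKL.bdd_2 [.a 0] [.d 1, .d 0]) (step SKL.cnv_d2_1 [.a 0, .d 1, .d 2, .d 1] [])))
lemma AD2_2 : skCon (ofL [.d 2, .a 1]) (ofL [.a 1, .d 2, .d 0, .d 2, .b 0, .b 2]) :=
  (skCon.trans (step SKL.AD0_1 [] []) (skCon.trans (step SKL.bdd_0 [.a 1] [.d 2, .d 1]) (step SKL.cnv_d2_2 [.a 1, .d 2, .d 0, .d 2] [])))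
lemma ABb2_0 : skCon (ofL [.b 0, .a 2]) (ofL [.a 2, .d 0, .d 1, .b 0, .b 1, .b 0]) :=
  (skCon.trans (step SKL.ABb0_2 [] []) (skCon.trans (step SKL.bdd_1 [.a 2] [.b 0, .d 2]) (step SKL.cnv_d2_0 [.a 2, .d 0, .d 1, .b 0] [])))
lemma ABb2_1 : skCon (ofL [.b 1, .a 0]) (ofL [.a 0, .d 1, .d 2, .b 1, .b 2, .b 1]) :=
  (skCon.trans (step SKL.ABb0_0 [] []) (skCon.trans (step SKL.bdd_2 [.a 0] [.b 1, .d 0]) (step SKL.cnv_d2_1 [.a 0, .d 1, .d 2, .b 1] [])))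
lemma ABb2_2 : skCon (ofL [.b 2, .a 1]) (ofL [.a 1, .d 2, .d 0, .b 2, .b 0, .b 2]) :=
  (skCon.trans (step SKL.ABb0_1 [] []) (skCon.trans (step SKL.bdd_0 [.a 1] [.b 2, .d 1]) (step SKL.cnv_d2_2 [.a 1, .d 2, .d 0, .b 2] [])))
lemma E32_0 : skCon (ofL [.a 2, .d 0, .d 1, .c 0]) (ofL [.c 0, .a 2, .d 0, .d 1]) :=
  (skCon.trans (step (skCon.symm (skCon_of (SKRel.r1a 1))) [] [.d 1, .c 0]) (skCon.trans (step (skCon.symm SKL.STAR0_1) [] []) (step (skCon_of (SKRel.r1a 1)) [.c 0] [.d 1])))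
lemma E32_1 : skCon (ofL [.a 0, .d 1, .d 2, .c 1]) (ofL [.c 1, .a 0, .d 1, .d 2]) :=
  (skCon.trans (step (skCon.symm (skCon_of (SKRel.r1a 2))) [] [.d 2, .c 1]) (skCon.trans (step (skCon.symm SKL.STAR0_2) [] []) (step (skCon_of (SKRel.r1a 2)) [.c 1] [.d 2])))
lemma E32_2 : skCon (ofL [.a 1, .d 2, .d 0, .c 2]) (ofL [.c 2, .a 1, .d 2, .d 0]) :=
  (skCon.trans (step (skCon.symm (skCon_of (SKRel.r1a 0))) [] [.d 0, .c 2]) (skCon.trans (step (skCon.symm SKL.STAR0_0) [] []) (step (skCon_of (SKRel.r1a 0)) [.c 2] [.d 0])))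
lemma g33a_0 : skCon (ofL [.d 0, .c 0, .a 1]) (ofL [.a 1, .d 0, .c 0]) :=
  (skCon.trans (step SKL.R1A1_0 [.d 0, .c 0] []) (skCon.trans (step (skCon.symm (skCon_of (SKRel.r4db 1))) [.d 0, .c 0, .a 2, .d 0] []) (skCon.trans (step (skCon.symm SKL.E32_0) [.d 0] [.b 1]) (skCon.trans (step SKL.AD2_0 [] [.d 0, .d 1, .c 0, .b 1]) (skCon.trans (step SKL.L0vi_0 [.a 2, .d 0, .d 1, .d 0, .b 1, .b 0, .d 0, .d 1] []) (skCon.trans (step (skCon_of (SKRel.r4bd 0)) [.a 2, .d 0, .d 1, .d 0, .b 1] [.d 1, .b 0, .b 1, .d 0, .c 0]) (skCon.trans (step (skCon_of (SKRel.r4bd 1)) [.a 2, .d 0, .d 1, .d 0] [.b 0, .b 1, .d 0, .c 0]) (skCon.trans (step (skCon_of (SKRel.r4db 0)) [.a 2, .d 0, .d 1] [.b 1, .d 0, .c 0]) (skCon.trans (step (skCon_of (SKRel.r4db 1)) [.a 2, .d 0] [.d 0, .c 0]) (step (skCon.symm SKL.R1A1_0) [] [.d 0, .c 0]))))))))))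
lemma g33a_1 : skCon (ofL [.d 1, .c 1, .a 2]) (ofL [.a 2, .d 1, .c 1]) :=
  (skCon.trans (step SKL.R1A1_1 [.d 1, .c 1] []) (skCon.trans (step (skCon.symm (skCon_of (SKRel.r4db 2))) [.d 1, .c 1, .a 0, .d 1] []) (skCon.trans (step (skCon.symm SKL.E32_1) [.d 1] [.b 2]) (skCon.trans (step SKL.AD2_1 [] [.d 1, .d 2, .c 1, .b 2]) (skCon.trans (step SKL.L0vi_1 [.a 0, .d 1, .d 2, .d 1, .b 2, .b 1, .d 1, .d 2] []) (skCon.trans (step (skCon_of (SKRel.r4bd 1)) [.a 0, .d 1, .d 2, .d 1, .b 2] [.d 2, .b 1, .b 2, .d 1, .c 1]) (skCon.trans (step (skCon_of (SKRel.r4bd 2)) [.a 0, .d 1, .d 2, .d 1] [.b 1, .b 2, .d 1, .c 1]) (skCon.trans (step (skCon_of (SKRel.r4db 1)) [.a 0, .d 1, .d 2] [.b 2, .d 1, .c 1]) (skCon.trans (step (skCon_of (SKRel.r4db 2)) [.a 0, .d 1] [.d 1, .c 1]) (step (skCon.symm SKL.R1A1_1) [] [.d 1, .c 1]))))))))))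
lemma g33a_2 : skCon (ofL [.d 2, .c 2, .a 0]) (ofL [.a 0, .d 2, .c 2]) :=
  (skCon.trans (step SKL.R1A1_2 [.d 2, .c 2] []) (skCon.trans (step (skCon.symm (skCon_of (SKRel.r4db 0))) [.d 2, .c 2, .a 1, .d 2] []) (skCon.trans (step (skCon.symm SKL.E32_2) [.d 2] [.b 0]) (skCon.trans (step SKL.AD2_2 [] [.d 2, .d 0, .c 2, .b 0]) (skCon.trans (step SKL.L0vi_2 [.a 1, .d 2, .d 0, .d 2, .b 0, .b 2, .d 2, .d 0] []) (skCon.trans (step (skCon_of (SKRel.r4bd 2)) [.a 1, .d 2, .d 0, .d 2, .b 0] [.d 0, .b 2, .b 0, .d 2, .c 2]) (skCon.trans (step (skCon_of (SKRel.r4bd 0)) [.a 1, .d 2, .d 0, .d 2] [.b 2, .b 0, .d 2, .c 2]) (skCon.trans (step (skCon_of (SKRel.r4db 2)) [.a 1, .d 2, .d 0] [.b 0, .d 2, .c 2]) (skCon.trans (step (skCon_of (SKRel.r4db 0)) [.a 1, .d 2] [.d 2, .c 2]) (step (skCon.symm SKL.R1A1_2) [] [.d 2, .c 2]))))))))))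
lemma g34a_0 : skCon (ofL [.b 0, .c 0, .a 2]) (ofL [.a 2, .b 0, .c 0]) :=
  (skCon.trans (step (skCon.symm (skCon_of (SKRel.r4db 0))) [.b 0, .c 0, .a 2] []) (skCon.trans (step (skCon.symm (skCon_of (SKRel.r4db 1))) [.b 0, .c 0, .a 2, .d 0] [.b 0]) (skCon.trans (step (skCon.symm SKL.E32_0) [.b 0] [.b 1, .b 0]) (skCon.trans (step SKL.ABb2_0 [] [.d 0, .d 1, .c 0, .b 1, .b 0]) (skCon.trans (step SKL.L0vi_0 [.a 2, .d 0, .d 1, .b 0, .b 1, .b 0, .d 0, .d 1] [.b 0]) (skCon.trans (step SKL.L0ui_0 [.a 2, .d 0, .d 1, .b 0, .b 1, .b 0, .d 0, .d 1, .b 0, .b 1, .d 0] []) (skCon.trans (step (skCon_of (SKRel.r4bd 0)) [.a 2, .d 0, .d 1, .b 0, .b 1] [.d 1, .b 0, .b 1, .d 0, .b 0, .d 1, .d 0, .d 0, .b 1, .b 0, .b 0, .c 0]) (skCon.trans (step (skCon_of (SKRel.r4bd 1)) [.a 2, .d 0, .d 1, .b 0] [.b 0, .b 1, .d 0, .b 0,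 .d 1, .d 0, .d 0, .b 1, .b 0, .b 0, .c 0]) (skCon.trans (step (skCon_of (SKRel.r4db 0)) [.a 2, .d 0, .d 1, .b 0, .b 0, .b 1] [.d 1, .d 0, .d 0, .b 1, .b 0, .b 0, .c 0]) (skCon.trans (step (skCon_of (SKRel.r4bd 1)) [.a 2, .d 0, .d 1, .b 0, .b 0] [.d 0, .d 0, .b 1, .b 0, .b 0, .c 0]) (skCon.trans (step (skCon_of (SKRel.r4bd 0)) [.a 2, .d 0, .d 1, .b 0] [.d 0, .b 1, .b 0, .b 0, .c 0]) (skCon.trans (step (skCon_of (SKRel.r4bd 0)) [.a 2, .d 0, .d 1] [.b 1, .b 0, .b 0, .c 0]) (skCon.trans (step (skCon_of (SKRel.r4db 1)) [.a 2, .d 0] [.b 0, .b 0, .c 0]) (step (skCon_of (SKRel.r4db 0)) [.a 2] [.b 0, .c 0]))))))))))))))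
lemma g34a_1 : skCon (ofL [.b 1, .c 1, .a 0]) (ofL [.a 0, .b 1, .c 1]) :=
  (skCon.trans (step (skCon.symm (skCon_of (SKRel.r4db 1))) [.b 1, .c 1, .a 0] []) (skCon.trans (step (skCon.symm (skCon_of (SKRel.r4db 2))) [.b 1, .c 1, .a 0, .d 1] [.b 1]) (skCon.trans (step (skCon.symm SKL.E32_1) [.b 1] [.b 2, .b 1]) (skCon.trans (step SKL.ABb2_1 [] [.d 1, .d 2, .c 1, .b 2, .b 1]) (skCon.trans (step SKL.L0vi_1 [.a 0, .d 1, .d 2, .b 1, .b 2, .b 1, .d 1, .d 2] [.b 1]) (skCon.trans (step SKL.L0ui_1 [.a 0, .d 1, .d 2, .b 1, .b 2, .b 1, .d 1, .d 2, .b 1, .b 2, .d 1] []) (skCon.trans (step (skCon_of (SKRel.r4bd 1)) [.a 0, .d 1, .d 2, .b 1, .b 2] [.d 2, .b 1, .b 2, .d 1, .b 1, .d 2, .d 1, .d 1, .b 2, .b 1, .b 1, .c 1]) (skCon.trans (step (skCon_of (SKRel.r4bd 2)) [.a 0, .d 1, .d 2, .b 1] [.b 1, .b 2, .d 1, .b 1,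 .d 2, .d 1, .d 1, .b 2, .b 1, .b 1, .c 1]) (skCon.trans (step (skCon_of (SKRel.r4db 1)) [.a 0, .d 1, .d 2, .b 1, .b 1, .b 2] [.d 2, .d 1, .d 1, .b 2, .b 1, .b 1, .c 1]) (skCon.trans (step (skCon_of (SKRel.r4bd 2)) [.a 0, .d 1, .d 2, .b 1, .b 1] [.d 1, .d 1, .b 2, .b 1, .b 1, .c 1]) (skCon.trans (step (skCon_of (SKRel.r4bd 1)) [.a 0, .d 1, .d 2, .b 1] [.d 1, .b 2, .b 1, .b 1, .c 1]) (skCon.trans (step (skCon_of (SKRel.r4bd 1)) [.a 0, .d 1, .d 2] [.b 2, .b 1, .b 1, .c 1]) (skCon.trans (step (skCon_of (SKRel.r4db 2)) [.a 0, .d 1] [.b 1, .b 1, .c 1]) (step (skCon_of (SKRel.r4db 1)) [.a 0] [.b 1, .c 1]))))))))))))))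
lemma g34a_2 : skCon (ofL [.b 2, .c 2, .a 1]) (ofL [.a 1, .b 2, .c 2]) :=
  (skCon.trans (step (skCon.symm (skCon_of (SKRel.r4db 2))) [.b 2, .c 2, .a 1] []) (skCon.trans (step (skCon.symm (skCon_of (SKRel.r4db 0))) [.b 2, .c 2, .a 1, .d 2] [.b 2]) (skCon.trans (step (skCon.symm SKL.E32_2) [.b 2] [.b 0, .b 2]) (skCon.trans (step SKL.ABb2_2 [] [.d 2, .d 0, .c 2, .b 0, .b 2]) (skCon.trans (step SKL.L0vi_2 [.a 1, .d 2, .d 0, .b 2, .b 0, .b 2, .d 2, .d 0] [.b 2]) (skCon.trans (step SKL.L0ui_2 [.a 1, .d 2, .d 0, .b 2, .b 0, .b 2, .d 2, .d 0, .b 2, .b 0, .d 2] []) (skCon.trans (step (skCon_of (SKRel.r4bd 2)) [.a 1, .d 2, .d 0, .b 2, .b 0] [.d 0, .b 2, .b 0, .d 2, .b 2, .d 0, .d 2, .d 2, .b 0, .b 2, .b 2, .c 2]) (skCon.trans (step (skCon_of (SKRel.r4bd 0)) [.a 1, .d 2, .d 0, .b 2] [.b 2, .b 0, .d 2, .b 2,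 .d 0, .d 2, .d 2, .b 0, .b 2, .b 2, .c 2]) (skCon.trans (step (skCon_of (SKRel.r4db 2)) [.a 1, .d 2, .d 0, .b 2, .b 2, .b 0] [.d 0, .d 2, .d 2, .b 0, .b 2, .b 2, .c 2]) (skCon.trans (step (skCon_of (SKRel.r4bd 0)) [.a 1, .d 2, .d 0, .b 2, .b 2] [.d 2, .d 2, .b 0, .b 2, .b 2, .c 2]) (skCon.trans (step (skCon_of (SKRel.r4bd 2)) [.a 1, .d 2, .d 0, .b 2] [.d 2, .b 0, .b 2, .b 2, .c 2]) (skCon.trans (step (skCon_of (SKRel.r4bd 2)) [.a 1, .d 2, .d 0] [.b 0, .b 2, .b 2, .c 2]) (skCon.trans (step (skCon_of (SKRel.r4db 0)) [.a 1, .d 2] [.b 2, .b 2, .c 2]) (step (skCon_of (SKRel.r4db 2)) [.a 1] [.b 2, .c 2]))))))))))))))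
end SKL

/-- (33)-(34): (d_i c_i) w ~ w (d_i c_i) for w ∈ B_{i+1} and
(b_i c_i) w ~ w (b_i c_i) for w ∈ B_{i-1}. -/
theorem equiv_33_34 : ∀ i : ZMod 3,
    (∀ w ∈ Bset (i+1), skCon (d i * c i * w) (w * (d i * c i))) ∧
    (∀ w ∈ Bset (i-1), skCon (b i * c i * w) (w * (b i * c i))) := by
  have h : ∀ i : ZMod 3, i = 0 ∨ i = 1 ∨ i = 2 := by decide
  intro i
  rcases h i with rfl | rfl | rfl <;>
  · constructor <;>
    · intro w hw
      simp only [Bset, Set.mem_insert_iff, Set.mem_singleton_iff] at hw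
      rcases hw with rfl | rfl | rfl | rfl | rfl | rfl
      · first
        | exact SKL.g33a_0 | exact SKL.g33a_1 | exact SKL.g33a_2
        | exact SKL.g34a_0 | exact SKL.g34a_1 | exact SKL.g34a_2
      · first
        | exact SKL.g33b_0 | exact SKL.g33b_1 | exact SKL.g33b_2
        | exact SKL.g34b_0 | exact SKL.g34b_1 | exact SKL.g34b_2
      · first
        | exact SKL.g33c_0 | exact SKL.g33c_1 | exact SKL.g33c_2
        | exact SKL.g34c_0 | exact SKL.g34c_1 | exact SKL.g34c_2
      · first
        | exact SKL.g33d_0 | exact SKL.g33d_1 | exact SKL.g33d_2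
        | exact SKL.g34d_0 | exact SKL.g34d_1 | exact SKL.g34d_2
      · first
        | exact SKL.g33si_0 | exact SKL.g33si_1 | exact SKL.g33si_2
        | exact SKL.g34si_0 | exact SKL.g34si_1 | exact SKL.g34si_2
      · first
        | exact SKL.g33s_0 | exact SKL.g33s_1 | exact SKL.g33s_2
        | exact SKL.g34s_0 | exact SKL.g34s_1 | exact SKL.g34s_2
end

section
/- For every i in Z/3 and every word w in the set B_i, the equivalences t_i w ~ w t_i and t_i' w ~ w t_i' hold in SK, where t_i = b_{i+1} d_{i-1} d_{i+1} b_{i-1} and t_i' = d_{i-1} b_{i+1} b_{i-1} d_{i+1}. -/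
section Aux

lemma q_rel {u v : Word} (h : ((u : Word) : skCon.Quotient) = v) : skCon u v :=
  (Con.eq skCon).mp h

lemma rel_q {u v : Word} (h : SKRel u v) : ((u : Word) : skCon.Quotient) = v :=
  (Con.eq skCon).mpr (ConGen.Rel.of u v h)

lemma bd_q (j : ZMod 3) : ((b j : Word) : skCon.Quotient) * ((d j : Word) : skCon.Quotient) = 1 := by
  have := rel_q (SKRel.r4bd j); simpa using this

lemma db_q (j : ZMod 3) : ((d j : Word) : skCon.Quotient) * ((b j : Word) : skCon.Quotient) = 1 := by
  have := rel_q (SKRel.r4db j); simpa using this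

lemma bd_cancel (j : ZMod 3) (z : skCon.Quotient) :
    ((b j : Word) : skCon.Quotient) * (((d j : Word) : skCon.Quotient) * z) = z := by
  rw [← mul_assoc, bd_q, one_mul]

lemma db_cancel (j : ZMod 3) (z : skCon.Quotient) :
    ((d j : Word) : skCon.Quotient) * (((b j : Word) : skCon.Quotient) * z) = z := by
  rw [← mul_assoc, db_q, one_mul]

lemma comm_of_comm_inv {M : Type*} [Monoid M] {s u v : M}
    (h : s * u = u * s) (huv : u * v = 1) (hvu : v * u = 1) : s * v = v * s :=
  calc s * v = (v * u) * s * v := by rw [hvu, one_mul]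
  _ = v * (s * u) * v := by rw [mul_assoc v u s, h]
  _ = (v * s) * (u * v) := by rw [← mul_assoc v s u, mul_assoc (v * s) u v]
  _ = v * s := by rw [huv, mul_one]

lemma t_comm (i : ZMod 3) {w : Word}
    (hw : w ∈ ({a i, b i, c i, x i, b (i-1) * d i * d (i-1)} : Set Word)) :
    ((t i : Word) : skCon.Quotient) * w = (w : skCon.Quotient) * (t i : Word) := by
  have := rel_q (SKRel.r9 i w hw); simpa using this

lemma tt'_q (i : ZMod 3) :
    ((t i : Word) : skCon.Quotient) * ((t' i : Word) : skCon.Quotient) = 1 := by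
  simp [t, t', mul_assoc, bd_cancel, db_cancel, bd_q, db_q]

lemma t't_q (i : ZMod 3) :
    ((t' i : Word) : skCon.Quotient) * ((t i : Word) : skCon.Quotient) = 1 := by
  simp [t, t', mul_assoc, bd_cancel, db_cancel, bd_q, db_q]

end Aux

/-- (37): t_i w ~ w t_i and t'_i w ~ w t'_i for every w ∈ B_i, where
t_i = b_{i+1} d_{i-1} d_{i+1} b_{i-1} and t'_i = d_{i-1} b_{i+1} b_{i-1} d_{i+1}. -/
theorem equiv_37 : ∀ i : ZMod 3, ∀ w ∈ Bset i,
    skCon (t i * w) (w * t i) ∧ skCon (t' i * w) (w * t' i) := by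
  intro i w hw
  have key : ((t i : Word) : skCon.Quotient) * w = (w : skCon.Quotient) * (t i : Word) := by
    simp only [Bset, Set.mem_insert_iff, Set.mem_singleton_iff] at hw
    rcases hw with rfl | rfl | rfl | rfl | rfl | rfl
    · exact t_comm i (by simp)
    · exact t_comm i (by simp)
    · exact t_comm i (by simp)
    · -- w = d i : use commutation with b i and b i * d i = d i * b i = 1
      exact comm_of_comm_inv (t_comm i (by simp)) (bd_q i) (db_q i)
    · -- w = b (i-1) * b i * d (i-1) : inverse of u = b (i-1) * d i * d (i-1)
      have hu : ((t i : Word) : skCon.Quotient) * (b (i-1) * d i * d (i-1) : Word)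
          = ((b (i-1) * d i * d (i-1) : Word) : skCon.Quotient) * (t i : Word) :=
        t_comm i (by simp)
      have huv : ((b (i-1) * d i * d (i-1) : Word) : skCon.Quotient)
          * ((b (i-1) * b i * d (i-1) : Word) : skCon.Quotient) = 1 := by
        simp [mul_assoc, bd_cancel, db_cancel, bd_q, db_q]
      have hvu : ((b (i-1) * b i * d (i-1) : Word) : skCon.Quotient)
          * ((b (i-1) * d i * d (i-1) : Word) : skCon.Quotient) = 1 := by
        simp [mul_assoc, bd_cancel, db_cancel, bd_q, db_q]
      exact comm_of_comm_inv hu huv hvu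
    · exact t_comm i (by simp)
  have key' : ((t' i : Word) : skCon.Quotient) * w = (w : skCon.Quotient) * (t' i : Word) :=
    (comm_of_comm_inv key.symm (tt'_q i) (t't_q i)).symm
  constructor
  · exact q_rel (by simpa using key)
  · exact q_rel (by simpa using key')
end

section
/- For every i in Z/3, every word w in the set B_{i+1} satisfies (d_i x_i b_i) w ~ w (d_i x_i b_i) in SK, and every word w in the set B_{i-1} satisfies (b_i x_i d_i) w ~ w (b_i x_i d_i) in SK. -/
namespace SKAux

abbrev SK := skCon.Quotient

def π : Word →* SK := skCon.mk'

lemma toCon {u v : Word} (h : π u = π v) : skCon u v := skCon.eq.mp h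

lemma rel {u v : Word} (h : SKRel u v) : π u = π v :=
  skCon.eq.mpr (ConGen.Rel.of u v h)

abbrev A' (i : ZMod 3) : SK := π (a i)
abbrev B' (i : ZMod 3) : SK := π (b i)
abbrev C' (i : ZMod 3) : SK := π (c i)
abbrev D' (i : ZMod 3) : SK := π (d i)
abbrev X' (i : ZMod 3) : SK := π (x i)

lemma z1 : ∀ j : ZMod 3, j - 1 + 1 = j := by decide
lemma z2 : ∀ j : ZMod 3, j + 1 - 1 = j := by decide
lemma z3 : ∀ j : ZMod 3, j - 1 - 1 = j + 1 := by decide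
lemma z4 : ∀ j : ZMod 3, j + 1 + 1 = j - 1 := by decide

lemma bd (i : ZMod 3) : B' i * D' i = 1 := by
  have h := rel (SKRel.r4bd i); simpa [map_mul, map_one] using h

lemma db (i : ZMod 3) : D' i * B' i = 1 := by
  have h := rel (SKRel.r4db i); simpa [map_mul, map_one] using h

lemma bd' (i : ZMod 3) (z : SK) : B' i * (D' i * z) = z := by
  rw [← mul_assoc, bd, one_mul]

lemma db' (i : ZMod 3) (z : SK) : D' i * (B' i * z) = z := by
  rw [← mul_assoc, db, one_mul]

lemma x2 (i : ZMod 3) : X' i = D' (i+1) * X' (i-1) * B' (i+1) := by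
  have h := rel (SKRel.r2 i); simpa [map_mul] using h

lemma c9 (i : ZMod 3) {w : Word}
    (hw : w ∈ ({a i, b i, c i, x i, b (i-1) * d i * d (i-1)} : Set Word)) :
    Commute (B' (i+1) * D' (i-1) * D' (i+1) * B' (i-1)) (π w) := by
  have h := rel (SKRel.r9 i w hw)
  simp only [t, map_mul] at h
  exact h

lemma c10 (i : ZMod 3) {w : Word}
    (hw : w ∈ ({a (i+1), b (i+1), c (i+1), x (i+1), b i * d (i+1) * d i} : Set Word)) :
    Commute (D' i * X' i * B' i) (π w) := by
  have h := rel (SKRel.r10 i w hw)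
  simp only [map_mul] at h
  exact h

lemma comm_inv {u w w' : SK} (h1 : w * w' = 1) (h2 : w' * w = 1) (h : Commute u w) :
    Commute u w' := by
  show u * w' = w' * u
  calc u * w' = w' * w * u * w' := by rw [h2, one_mul]
    _ = w' * (u * w) * w' := by rw [mul_assoc w' w u, h.eq]
    _ = w' * u := by simp only [mul_assoc, h1, mul_one]

lemma comm_conj {g g' u w : SK} (h1 : g * g' = 1) (h2 : g' * g = 1) (h : Commute u w) :
    Commute (g * u * g') (g * w * g') := by
  show g * u * g' * (g * w * g') = g * w * g' * (g * u * g')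
  have k : ∀ p q : SK, g * p * g' * (g * q * g') = g * (p * q) * g' := by
    intro p q
    calc g * p * g' * (g * q * g') = g * (p * ((g' * g) * (q * g'))) := by
          simp only [mul_assoc]
      _ = g * (p * q) * g' := by rw [h2, one_mul]; simp only [mul_assoc]
  rw [k, k, h.eq]

lemma middle {T Ti w : SK} (h2 : Ti * T = 1) (h : Commute T w) : Ti * w * T = w := by
  rw [mul_assoc, ← h.eq, ← mul_assoc, h2, one_mul]

lemma sandwich {g g' u : SK} (h1 : g * g' = 1) : g * (g' * u * g) * g' = u := by
  calc g * (g' * u * g) * g' = (g * g') * u * (g * g') := by simp only [mul_assoc]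
    _ = u := by rw [h1, one_mul, mul_one]

lemma inv3a (j k : ZMod 3) : (B' j * D' k * D' j) * (B' j * B' k * D' j) = 1 := by
  simp only [mul_assoc, bd', db', bd, db, one_mul, mul_one]

lemma inv3b (j k : ZMod 3) : (B' j * B' k * D' j) * (B' j * D' k * D' j) = 1 := by
  simp only [mul_assoc, bd', db', bd, db, one_mul, mul_one]

lemma TiT (i : ZMod 3) :
    (D' (i+1) * B' i * B' (i+1) * D' i) * (B' i * D' (i+1) * D' i * B' (i+1)) = 1 := by
  simp only [mul_assoc, bd', db', bd, db, one_mul, mul_one]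

lemma keyA (i : ZMod 3) : B' i * X' i * D' i
    = (B' i * D' (i+1) * D' i) * X' (i+1) * (B' i * B' (i+1) * D' i) := by
  rw [x2 i, x2 (i-1), z1 i, z3 i]
  simp only [mul_assoc]

lemma part1 (i : ZMod 3) : ∀ w ∈ Bset (i+1), Commute (D' i * X' i * B' i) (π w) := by
  have hW : Commute (D' i * X' i * B' i) (B' i * D' (i+1) * D' i) := by
    have h := c10 i (w := b i * d (i+1) * d i) (by simp)
    simpa only [map_mul] using h
  intro w hw
  simp only [Bset, Set.mem_insert_iff, Set.mem_singleton_iff] at hw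
  rcases hw with rfl | rfl | rfl | rfl | rfl | rfl
  · exact c10 i (by simp)
  · exact c10 i (by simp)
  · exact c10 i (by simp)
  · exact comm_inv (bd (i+1)) (db (i+1)) (c10 i (w := b (i+1)) (by simp))
  · rw [z2 i]; simp only [map_mul]
    exact comm_inv (inv3a i (i+1)) (inv3b i (i+1)) hW
  · rw [z2 i]; simp only [map_mul]; exact hW

lemma part2core (i : ZMod 3) {w : SK}
    (h9 : Commute (B' i * D' (i+1) * D' i * B' (i+1)) w)
    (hc : Commute (X' (i+1)) (B' (i+1) * w * D' (i+1))) :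
    Commute (B' i * X' i * D' i) w := by
  have hmid : (D' (i+1) * B' i * B' (i+1) * D' i) * w *
      (B' i * D' (i+1) * D' i * B' (i+1)) = w := middle (TiT i) h9
  have hB : (B' i * B' (i+1) * D' i) * w * (B' i * D' (i+1) * D' i)
      = B' (i+1) * w * D' (i+1) := by
    calc (B' i * B' (i+1) * D' i) * w * (B' i * D' (i+1) * D' i)
        = B' (i+1) * ((D' (i+1) * B' i * B' (i+1) * D' i) * w *
            (B' i * D' (i+1) * D' i * B' (i+1))) * D' (i+1) := by
          simp only [mul_assoc, bd', db', bd, db, one_mul, mul_one]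
      _ = B' (i+1) * w * D' (i+1) := by rw [hmid]
  have hc' : Commute (X' (i+1))
      ((B' i * B' (i+1) * D' i) * w * (B' i * D' (i+1) * D' i)) := by
    rw [hB]; exact hc
  have h4 := comm_conj (inv3a i (i+1)) (inv3b i (i+1)) hc'
  have h5 : (B' i * D' (i+1) * D' i) * ((B' i * B' (i+1) * D' i) * w *
      (B' i * D' (i+1) * D' i)) * (B' i * B' (i+1) * D' i) = w :=
    sandwich (inv3a i (i+1))
  rw [h5, ← keyA i] at h4
  exact h4

lemma part2 (i : ZMod 3) : ∀ w ∈ Bset (i-1), Commute (B' i * X' i * D' i) (π w) := by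
  have hT : ∀ w : Word, w ∈ ({a (i-1), b (i-1), c (i-1), x (i-1),
      b (i-1-1) * d (i-1) * d (i-1-1)} : Set Word) →
      Commute (B' i * D' (i+1) * D' i * B' (i+1)) (π w) := by
    intro w hw
    have h := c9 (i-1) hw
    rw [z1 i, z3 i] at h
    exact h
  have hprev : Commute (B' i * D' (i+1) * D' i * B' (i+1))
      (B' (i+1) * D' (i-1) * D' (i+1)) := by
    have h := hT (b (i-1-1) * d (i-1) * d (i-1-1)) (by simp)
    simp only [map_mul] at h
    rw [z3 i] at h
    exact h
  have hC : ∀ w : Word, w ∈ Bset (i-1) →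
      Commute (X' (i+1)) (B' (i+1) * π w * D' (i+1)) := by
    intro w hw
    have h1 : Commute (D' (i+1) * X' (i+1) * B' (i+1)) (π w) := by
      apply part1 (i+1)
      rwa [z4 i]
    have h2 := comm_conj (bd (i+1)) (db (i+1)) h1
    have h3 : B' (i+1) * (D' (i+1) * X' (i+1) * B' (i+1)) * D' (i+1) = X' (i+1) := by
      simp only [mul_assoc, bd', db', bd, db, one_mul, mul_one]
    rwa [h3] at h2
  intro w hw
  apply part2core i ?_ (hC w hw)
  simp only [Bset, Set.mem_insert_iff, Set.mem_singleton_iff] at hw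
  rcases hw with rfl | rfl | rfl | rfl | rfl | rfl
  · exact hT _ (by simp)
  · exact hT _ (by simp)
  · exact hT _ (by simp)
  · exact comm_inv (bd (i-1)) (db (i-1)) (hT (b (i-1)) (by simp))
  · rw [z3 i]; simp only [map_mul]
    exact comm_inv (inv3a (i+1) (i-1)) (inv3b (i+1) (i-1)) hprev
  · rw [z3 i]; simp only [map_mul]; exact hprev

end SKAux

/-- (38)-(39): (d_i x_i b_i) w ~ w (d_i x_i b_i) for w ∈ B_{i+1} and
(b_i x_i d_i) w ~ w (b_i x_i d_i) for w ∈ B_{i-1}. -/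

theorem equiv_38_39 : ∀ i : ZMod 3,
    (∀ w ∈ Bset (i+1), skCon (d i * x i * b i * w) (w * (d i * x i * b i))) ∧
    (∀ w ∈ Bset (i-1), skCon (b i * x i * d i * w) (w * (b i * x i * d i))) := by
  intro i
  constructor
  · intro w hw
    apply SKAux.toCon
    simp only [map_mul]
    exact (SKAux.part1 i w hw).eq
  · intro w hw
    apply SKAux.toCon
    simp only [map_mul]
    exact (SKAux.part2 i w hw).eq
end

section
/- For every i in Z/3 and every word w in the set B_i, the equivalence d_{i+1} b_{i-1} w d_{i-1} b_{i+1} ~ b_{i-1} d_{i+1} w b_{i+1} d_{i-1} holds in SK. -/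
/-- Images of related words are equal in the quotient. -/
lemma skCon_of_rel {u v : Word} (h : SKRel u v) :
    (u : skCon.Quotient) = v := skCon.eq.mpr (ConGen.Rel.of u v h)

/-- If `t` commutes with `s` and `w` is a two-sided inverse of `s`,
then `t` commutes with `w`. -/
lemma conj_comm {M : Type*} [Monoid M] {t s w : M}
    (hsw : s * w = 1) (hws : w * s = 1) (h : t * s = s * t) : t * w = w * t := by
  calc t * w = (w * s) * (t * w) := by rw [hws, one_mul]
    _ = w * ((s * t) * w) := by simp [mul_assoc]
    _ = w * ((t * s) * w) := by rw [h]
    _ = w * (t * (s * w)) := by simp [mul_assoc]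
    _ = w * t := by rw [hsw, mul_one]

/-- The key monoid computation. -/
lemma key_comm {M : Type*} [Monoid M] {b1 d1 b2 d2 W : M}
    (h1 : b1 * d1 = 1) (h2 : d1 * b1 = 1) (h3 : b2 * d2 = 1) (h4 : d2 * b2 = 1)
    (hT : (b1 * d2 * d1 * b2) * W = W * (b1 * d2 * d1 * b2)) :
    d1 * b2 * W * (d2 * b1) = b2 * d1 * W * (b1 * d2) := by
  have cdb1 : ∀ z : M, d1 * (b1 * z) = z := fun z => by rw [← mul_assoc, h2, one_mul]
  have cbd2 : ∀ z : M, b2 * (d2 * z) = z := fun z => by rw [← mul_assoc, h3, one_mul]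
  have hT' : ∀ z : M, b1 * (d2 * (d1 * (b2 * (W * z))))
      = W * (b1 * (d2 * (d1 * (b2 * z)))) := by
    intro z
    have := congrArg (· * z) hT
    simpa [mul_assoc] using this
  have hgoal := congrArg (fun y => b2 * (d1 * y)) (hT' (d2 * b1))
  simp only [cdb1, cbd2, h2, h3, mul_one] at hgoal
  simpa [mul_assoc] using hgoal

/-- (40): d_{i+1} b_{i-1} w d_{i-1} b_{i+1} ~ b_{i-1} d_{i+1} w b_{i+1} d_{i-1}
for every w ∈ B_i. -/
theorem equiv_40 : ∀ i : ZMod 3, ∀ w ∈ Bset i,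
    skCon (d (i+1) * b (i-1) * w * (d (i-1) * b (i+1)))
          (b (i-1) * d (i+1) * w * (b (i+1) * d (i-1))) := by
  intro i w hw
  rw [← skCon.eq]
  simp only [Con.coe_mul]
  -- basic cancellation facts
  have hbd : ∀ j : ZMod 3, (b j : skCon.Quotient) * d j = 1 := fun j => by
    have := skCon_of_rel (SKRel.r4bd j); simpa [Con.coe_mul] using this
  have hdb : ∀ j : ZMod 3, (d j : skCon.Quotient) * b j = 1 := fun j => by
    have := skCon_of_rel (SKRel.r4db j); simpa [Con.coe_mul] using this
  -- t i commutes with every element of Bset i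
  have ht : (t i : skCon.Quotient)
      = b (i+1) * d (i-1) * d (i+1) * b (i-1) := by
    simp [t, Con.coe_mul]
  have tcomm : (t i : skCon.Quotient) * w = w * t i := by
    have r9 : ∀ u : Word, u ∈ ({a i, b i, c i, x i, b (i-1) * d i * d (i-1)} : Set Word) →
        (t i : skCon.Quotient) * u = u * t i := by
      intro u hu
      have := skCon_of_rel (SKRel.r9 i u hu)
      simpa [Con.coe_mul] using this
    have hw' := hw
    simp only [Bset, Set.mem_insert_iff, Set.mem_singleton_iff] at hw'
    rcases hw' with rfl | rfl | rfl | rfl | rfl | rfl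
    · exact r9 _ (by simp)
    · exact r9 _ (by simp)
    · exact r9 _ (by simp)
    · -- w = d i : conjugate of b i
      exact conj_comm (hbd i) (hdb i) (r9 (b i) (by simp))
    · -- w = b (i-1) * b i * d (i-1) : inverse of s = b (i-1) * d i * d (i-1)
      have hs := r9 (b (i-1) * d i * d (i-1)) (by simp)
      simp only [Con.coe_mul] at hs ⊢
      refine conj_comm (s := (b (i-1) : skCon.Quotient) * d i * d (i-1)) ?_ ?_ hs
      · calc (b (i-1) : skCon.Quotient) * d i * d (i-1) * ((b (i-1) : skCon.Quotient) * b i * d (i-1))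
            = b (i-1) * d i * ((d (i-1) * b (i-1)) * (b i * d (i-1))) := by
              simp [mul_assoc]
          _ = b (i-1) * (d i * b i) * d (i-1) := by rw [hdb]; simp [mul_assoc]
          _ = 1 := by rw [hdb]; simpa using hbd (i-1)
      · calc (b (i-1) : skCon.Quotient) * b i * d (i-1) * ((b (i-1) : skCon.Quotient) * d i * d (i-1))
            = b (i-1) * b i * ((d (i-1) * b (i-1)) * (d i * d (i-1))) := by
              simp [mul_assoc]
          _ = b (i-1) * (b i * d i) * d (i-1) := by rw [hdb]; simp [mul_assoc]
          _ = 1 := by rw [hbd]; simpa using hbd (i-1)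
    · exact r9 _ (by simp)
  rw [ht] at tcomm
  exact key_comm (hbd (i+1)) (hdb (i+1)) (hbd (i-1)) (hdb (i-1)) tcomm
end

section
/- For each i in Z/3, every i-balanced word in the free monoid on A is ~-equivalent to some i-balanced word that contains only the seven letters a_i, b_i, c_i, d_i, x_i, b_{i-1}, d_{i-1}. -/
/-- The bracket coding for i-balancedness: a_i,b_i,c_i,d_i,x_i ↦ empty;
a_{i±1}, b_{i-1}, d_{i+1} ↦ '(' (= 1); b_{i+1}, c_{i±1}, d_{i-1} ↦ ')' (= -1);
x_{i±1} ↦ ')(' (= [-1, 1]). -/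
def code (i : ZMod 3) : Letter → List ℤ
  | .a j => if j = i then [] else [1]
  | .b j => if j = i then [] else if j = i - 1 then [1] else [-1]
  | .c j => if j = i then [] else [-1]
  | .d j => if j = i then [] else if j = i + 1 then [1] else [-1]
  | .x j => if j = i then [] else [-1, 1]

/-- The bracket sequence of a word under the i-balancedness coding. -/
def brackets (i : ZMod 3) (w : Word) : List ℤ :=
  ((FreeMonoid.toList w).map (code i)).flatten

/-- A word is i-balanced if its bracket sequence is completely balanced:
every prefix has at least as many '(' as ')', and totals agree. -/
def IBalanced (i : ZMod 3) (w : Word) : Prop :=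
  (∀ p : List ℤ, p <+: brackets i w → 0 ≤ p.sum) ∧ (brackets i w).sum = 0


namespace SKAux
open FreeMonoid

/-- The quotient monoid SK. -/
abbrev Q : Type := skCon.Quotient

/-- The projection to SK. -/
def q : Word →* Q := skCon.mk'

lemma q_rel {u v : Word} (h : SKRel u v) : q u = q v :=
  (Con.eq _).2 (ConGen.Rel.of _ _ h)

lemma con_of_q {u v : Word} (h : q u = q v) : skCon u v := (Con.eq _).1 h

-- index arithmetic in ZMod 3
lemma i11 (i : ZMod 3) : i + 1 + 1 = i - 1 := by revert i; decide
lemma i1m1 (i : ZMod 3) : i + 1 - 1 = i := by revert i; decide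
lemma im11 (i : ZMod 3) : i - 1 + 1 = i := by revert i; decide
lemma im1m1 (i : ZMod 3) : i - 1 - 1 = i + 1 := by revert i; decide
lemma ne1 (i : ZMod 3) : i + 1 ≠ i := by revert i; decide
lemma ne2 (i : ZMod 3) : i - 1 ≠ i := by revert i; decide
lemma ne3 (i : ZMod 3) : i + 1 ≠ i - 1 := by revert i; decide
lemma ne4 (i : ZMod 3) : i - 1 ≠ i + 1 := by revert i; decide
lemma tri (i j : ZMod 3) : j = i ∨ j = i + 1 ∨ j = i - 1 := by revert i j; decide

lemma bdQ (j : ZMod 3) : q (b j) * q (d j) = 1 := by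
  simpa [map_mul] using q_rel (SKRel.r4bd j)

lemma dbQ (j : ZMod 3) : q (d j) * q (b j) = 1 := by
  simpa [map_mul] using q_rel (SKRel.r4db j)

lemma rotQ (j : ZMod 3) (u : Q) (h : q (d j) * u = 1) : u * q (d j) = 1 := by
  have hu : u = q (b j) := by
    calc u = 1 * u := (one_mul u).symm
    _ = (q (b j) * q (d j)) * u := by rw [bdQ]
    _ = q (b j) * (q (d j) * u) := mul_assoc _ _ _
    _ = q (b j) := by rw [h, mul_one]
  rw [hu]; exact bdQ j

lemma cyc0 : q (d 0) * (q (d 1) * q (d 2)) = 1 := by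
  have := q_rel SKRel.r3
  simpa [map_mul, mul_assoc] using this

lemma cyc1 : q (d 1) * (q (d 2) * q (d 0)) = 1 := by
  have h := rotQ 0 (q (d 1) * q (d 2)) cyc0
  rwa [mul_assoc] at h

lemma cyc2 : q (d 2) * (q (d 0) * q (d 1)) = 1 := by
  have h := rotQ 1 (q (d 2) * q (d 0)) cyc1
  rwa [mul_assoc] at h

lemma cycQ (i : ZMod 3) : q (d (i - 1)) * (q (d i) * q (d (i + 1))) = 1 := by
  rcases tri 0 i with rfl | rfl | rfl
  · rw [show (0 : ZMod 3) - 1 = 2 from by decide, show (0 : ZMod 3) + 1 = 1 from by decide]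
    exact cyc2
  · rw [show (0 : ZMod 3) + 1 - 1 = 0 from by decide,
      show (0 : ZMod 3) + 1 + 1 = 2 from by decide]
    exact cyc0
  · rw [show (0 : ZMod 3) - 1 - 1 = 1 from by decide,
      show (0 : ZMod 3) - 1 + 1 = 0 from by decide]
    exact cyc1

lemma h1Q (i : ZMod 3) : q (d i) * q (d (i + 1)) = q (b (i - 1)) := by
  calc q (d i) * q (d (i + 1))
      = (q (b (i - 1)) * q (d (i - 1))) * (q (d i) * q (d (i + 1))) := by rw [bdQ, one_mul]
  _ = q (b (i - 1)) * (q (d (i - 1)) * (q (d i) * q (d (i + 1)))) := by rw [mul_assoc]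
  _ = q (b (i - 1)) := by rw [cycQ, mul_one]

lemma S1Q (i : ZMod 3) : q (d (i + 1)) = q (b i) * q (b (i - 1)) := by
  calc q (d (i + 1)) = (q (b i) * q (d i)) * q (d (i + 1)) := by rw [bdQ, one_mul]
  _ = q (b i) * (q (d i) * q (d (i + 1))) := mul_assoc _ _ _
  _ = q (b i) * q (b (i - 1)) := by rw [h1Q]

lemma S2Q (i : ZMod 3) : q (b (i + 1)) = q (d (i - 1)) * q (d i) := by
  calc q (b (i + 1))
      = (q (d (i - 1)) * (q (d i) * q (d (i + 1)))) * q (b (i + 1)) := by rw [cycQ, one_mul]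
  _ = (q (d (i - 1)) * q (d i)) * (q (d (i + 1)) * q (b (i + 1))) := by
        simp only [mul_assoc]
  _ = q (d (i - 1)) * q (d i) := by rw [dbQ, mul_one]

lemma S3Q (i : ZMod 3) : q (a (i - 1)) = q (a i) * (q (b i) * q (b (i - 1))) := by
  have h := q_rel (SKRel.r1a (i - 1))
  rw [im11 i, im1m1 i, map_mul] at h
  rw [h, S1Q]

lemma S4Q (i : ZMod 3) :
    q (a (i + 1)) = (q (a i) * (q (b i) * q (b (i - 1)))) * q (d i) := by
  have h := q_rel (SKRel.r1a (i + 1))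
  rw [i11 i, i1m1 i, map_mul] at h
  rw [h, S3Q]

lemma S5Q (i : ZMod 3) : q (c (i + 1)) = q (d (i - 1)) * q (c i) := by
  have h := q_rel (SKRel.r1c i)
  rw [map_mul] at h
  calc q (c (i + 1)) = 1 * q (c (i + 1)) := (one_mul _).symm
  _ = (q (d (i - 1)) * q (b (i - 1))) * q (c (i + 1)) := by rw [dbQ]
  _ = q (d (i - 1)) * (q (b (i - 1)) * q (c (i + 1))) := mul_assoc _ _ _
  _ = q (d (i - 1)) * q (c i) := by rw [← h]

lemma S6Q (i : ZMod 3) : q (c (i - 1)) = (q (d (i - 1)) * q (d i)) * q (c i) := by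
  have h := q_rel (SKRel.r1c (i - 1))
  rw [im11 i, im1m1 i, map_mul] at h
  rw [h, S2Q]

lemma S7Q (i : ZMod 3) :
    q (x (i + 1)) = (q (d (i - 1)) * q (x i)) * q (b (i - 1)) := by
  have h := q_rel (SKRel.r2 (i + 1))
  rw [i11 i, i1m1 i, map_mul, map_mul] at h
  exact h

lemma S8Q (i : ZMod 3) :
    q (x (i - 1)) = (((q (d (i - 1)) * q (d i)) * q (x i)) * q (b i)) * q (b (i - 1)) := by
  have h := q_rel (SKRel.r2 i)
  rw [map_mul, map_mul] at h
  have key : q (x (i - 1)) = (q (b (i + 1)) * q (x i)) * q (d (i + 1)) := by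
    calc q (x (i - 1)) = 1 * q (x (i - 1)) * 1 := by rw [one_mul, mul_one]
    _ = (q (b (i + 1)) * q (d (i + 1))) * q (x (i - 1)) *
          (q (b (i + 1)) * q (d (i + 1))) := by rw [bdQ]
    _ = q (b (i + 1)) * ((q (d (i + 1)) * q (x (i - 1)) * q (b (i + 1))) * q (d (i + 1))) := by
          simp only [mul_assoc]
    _ = q (b (i + 1)) * (q (x i) * q (d (i + 1))) := by rw [← h]
    _ = (q (b (i + 1)) * q (x i)) * q (d (i + 1)) := (mul_assoc _ _ _).symm
  rw [key, S1Q, S2Q]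
  simp only [mul_assoc]

/-- Replacement of each letter by an equivalent word over the seven
allowed letters, with the same bracket code. -/
def rep (i : ZMod 3) : Letter → Word
  | .a j => if j = i then a i else
      if j = i + 1 then (a i * (b i * b (i - 1))) * d i else a i * (b i * b (i - 1))
  | .b j => if j = i then b i else
      if j = i + 1 then d (i - 1) * d i else b (i - 1)
  | .c j => if j = i then c i else
      if j = i + 1 then d (i - 1) * c i else (d (i - 1) * d i) * c i
  | .d j => if j = i then d i else
      if j = i + 1 then b i * b (i - 1) else d (i - 1)
  | .x j => if j = i then x i else
      if j = i + 1 then (d (i - 1) * x i) * b (i - 1)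
      else (((d (i - 1) * d i) * x i) * b i) * b (i - 1)

lemma rep_con (i : ZMod 3) (l : Letter) : skCon (FreeMonoid.of l) (rep i l) := by
  apply con_of_q
  have nes := And.intro (ne1 i) (And.intro (ne2 i) (And.intro (ne3 i) (ne4 i)))
  rcases l with j | j | j | j | j <;> rcases tri i j with rfl | rfl | rfl
  · exact congrArg q (by simp [rep, a])
  · exact (S4Q _).trans (by simp [rep, ne1, ne2, ne3, ne4, map_mul, mul_assoc])
  · exact (S3Q _).trans (by simp [rep, ne1, ne2, ne3, ne4, map_mul, mul_assoc])
  · exact congrArg q (by simp [rep, b])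
  · exact (S2Q _).trans (by simp [rep, ne1, ne2, ne3, ne4, map_mul, mul_assoc])
  · exact congrArg q (by simp [rep, b, ne1, ne2, ne3, ne4])
  · exact congrArg q (by simp [rep, c])
  · exact (S5Q _).trans (by simp [rep, ne1, ne2, ne3, ne4, map_mul, mul_assoc])
  · exact (S6Q _).trans (by simp [rep, ne1, ne2, ne3, ne4, map_mul, mul_assoc])
  · exact congrArg q (by simp [rep, d])
  · exact (S1Q _).trans (by simp [rep, ne1, ne2, ne3, ne4, map_mul, mul_assoc])
  · exact congrArg q (by simp [rep, d, ne1, ne2, ne3, ne4])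
  · exact congrArg q (by simp [rep, x])
  · exact (S7Q _).trans (by simp [rep, ne1, ne2, ne3, ne4, map_mul, mul_assoc])
  · exact (S8Q _).trans (by simp [rep, ne1, ne2, ne3, ne4, map_mul, mul_assoc])

lemma brackets_mul (i : ZMod 3) (u v : Word) :
    brackets i (u * v) = brackets i u ++ brackets i v := by
  simp [brackets, FreeMonoid.toList_mul]

lemma brackets_of (i : ZMod 3) (l : Letter) :
    brackets i (FreeMonoid.of l) = code i l := by
  simp [brackets]

lemma rep_code (i : ZMod 3) (l : Letter) : brackets i (rep i l) = code i l := by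
  rcases l with j | j | j | j | j <;>
    rcases tri i j with rfl | rfl | rfl <;>
    simp [rep, code, brackets_mul, brackets_of, a, b, c, d, x, ne1, ne2, ne3, ne4]

lemma rep_mem (i : ZMod 3) (l : Letter) :
    ∀ m ∈ FreeMonoid.toList (rep i l),
      m ∈ ({Letter.a i, Letter.b i, Letter.c i, Letter.d i, Letter.x i,
            Letter.b (i - 1), Letter.d (i - 1)} : Set Letter) := by
  rcases l with j | j | j | j | j <;>
    rcases tri i j with rfl | rfl | rfl <;>
    simp [rep, a, b, c, d, x, FreeMonoid.toList_mul, FreeMonoid.toList_of,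
      ne1, ne2, ne3, ne4]

lemma lift_con (i : ZMod 3) (w : Word) :
    skCon w (FreeMonoid.lift (rep i) w) := by
  induction w using FreeMonoid.inductionOn with
  | one => simpa using skCon.refl 1
  | of l => rw [FreeMonoid.lift_eval_of]; exact rep_con i l
  | mul u v hu hv =>
      have h := skCon.mul hu hv
      rwa [← map_mul] at h

lemma lift_brackets (i : ZMod 3) (w : Word) :
    brackets i (FreeMonoid.lift (rep i) w) = brackets i w := by
  induction w using FreeMonoid.inductionOn with
  | one => simp
  | of l => rw [FreeMonoid.lift_eval_of, rep_code, brackets_of]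
  | mul u v hu hv => rw [map_mul, brackets_mul, brackets_mul, hu, hv]

lemma lift_mem (i : ZMod 3) (w : Word) :
    ∀ l ∈ FreeMonoid.toList (FreeMonoid.lift (rep i) w),
      l ∈ ({Letter.a i, Letter.b i, Letter.c i, Letter.d i, Letter.x i,
            Letter.b (i - 1), Letter.d (i - 1)} : Set Letter) := by
  induction w using FreeMonoid.inductionOn with
  | one => simp
  | of l => rw [FreeMonoid.lift_eval_of]; exact rep_mem i l
  | mul u v hu hv =>
      intro l hl
      rw [map_mul, FreeMonoid.toList_mul, List.mem_append] at hl
      rcases hl with h | h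
      · exact hu l h
      · exact hv l h

end SKAux

/-- Claim 2: every i-balanced word is equivalent to an i-balanced word
containing only the letters a_i, b_i, c_i, d_i, x_i, b_{i-1}, d_{i-1}. -/
theorem claim2 : ∀ i : ZMod 3, ∀ w : Word, IBalanced i w →
    ∃ w' : Word, skCon w w' ∧ IBalanced i w' ∧
      ∀ l ∈ FreeMonoid.toList w',
        l ∈ ({Letter.a i, Letter.b i, Letter.c i, Letter.d i, Letter.x i,
              Letter.b (i-1), Letter.d (i-1)} : Set Letter) := by
  intro i w hw
  refine ⟨FreeMonoid.lift (SKAux.rep i) w, SKAux.lift_con i w, ?_, SKAux.lift_mem i w⟩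
  unfold IBalanced at hw ⊢
  rw [SKAux.lift_brackets]
  exact hw
end

section
/- Fix i in Z/3. Every i-balanced word w on the seven letters a_i, b_i, c_i, d_i, x_i, b_{i-1}, d_{i-1} is ~-equivalent to a star decomposable word w' on the same seven letters with the same depth, d(w') = d(w). -/
/-- The encoding μ for words on the seven letters a_i, b_i, c_i, d_i, x_i, b_{i-1}, d_{i-1}:
a_i, b_i, c_i, d_i, x_i ↦ '•' (= 0), b_{i-1} ↦ '(' (= 1), d_{i-1} ↦ ')' (= -1). -/
def mu (i : ZMod 3) : Letter → List ℤ
  | .b j => if j = i - 1 then [1] else [0]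
  | .d j => if j = i - 1 then [-1] else [0]
  | _ => [0]

def muList (i : ZMod 3) (w : Word) : List ℤ :=
  ((FreeMonoid.toList w).map (mu i)).flatten

/-- The star of depth k: k left brackets, a bullet, k right brackets. -/
def star (k : ℕ) : List ℤ := List.replicate k 1 ++ [0] ++ List.replicate k (-1)

/-- A word is star decomposable if its encoding is a concatenation of stars. -/
def StarDecomposable (i : ZMod 3) (w : Word) : Prop :=
  ∃ ks : List ℕ, muList i w = (ks.map star).flatten

/-- The depth of a word: the maximal bracket difference over all prefixes of μ(w). -/
def depth (i : ZMod 3) (w : Word) : ℤ :=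
  ((muList i w).inits.map List.sum).foldr max 0

/-- The word uses only the seven letters a_i, b_i, c_i, d_i, x_i, b_{i-1}, d_{i-1}. -/
def OnSeven (i : ZMod 3) (w : Word) : Prop :=
  ∀ l ∈ FreeMonoid.toList w,
    l ∈ ({Letter.a i, Letter.b i, Letter.c i, Letter.d i, Letter.x i,
          Letter.b (i-1), Letter.d (i-1)} : Set Letter)

/-!
In SK the letters `b_{i-1}` and `d_{i-1}` are mutually inverse (relation (4)). Read `μ(w)` as a
walk that goes up at `b_{i-1}` and down at `d_{i-1}`. Replacing every other letter `l`, met at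
height `n`, by the star `b_{i-1}^n l d_{i-1}^n` and dropping the brackets does not change the
class of `w`, provided the heights stay nonnegative and end at zero; on the seven letters the
code of i-balancedness has the same prefix sums as `μ`, so this is what i-balancedness says.
The stars obtained have depth at most `D = d(w)`, and appending the trivial word
`(b_{i-1}^D b_i d_{i-1}^D) (b_{i-1}^D d_i d_{i-1}^D)` makes the depth exactly `D`.
-/

@[simp]
def maxPrefixSum : List ℤ → ℤ
  | [] => 0
  | a :: s => max 0 (a + maxPrefixSum s)

lemma maxPrefixSum_nonneg (s : List ℤ) : 0 ≤ maxPrefixSum s := by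
  cases s <;> simp

lemma foldr_max_map_add (l : List ℤ) (a c : ℤ) :
    (l.map (a + ·)).foldr max (a + c) = a + l.foldr max c := by
  induction l with
  | nil => rfl
  | cons b l ih => simp only [List.map_cons, List.foldr_cons, ih, max_add_add_left]

lemma foldr_max_map_sum_inits (s : List ℤ) (c : ℤ) :
    (s.inits.map List.sum).foldr max c = max c (maxPrefixSum s) := by
  induction s generalizing c with
  | nil => simp [max_comm]
  | cons a s ih =>
    have hsum : (s.inits.map (a :: ·)).map List.sum = (s.inits.map List.sum).map (a + ·) := by
      simp [Function.comp_def]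
    rw [List.inits_cons, List.map_cons, List.foldr_cons, hsum, ← add_sub_cancel a c,
      foldr_max_map_add, ih]
    simp only [List.sum_nil, maxPrefixSum]
    omega

lemma maxPrefixSum_append (s t : List ℤ) :
    maxPrefixSum (s ++ t) = max (maxPrefixSum s) (s.sum + maxPrefixSum t) := by
  induction s with
  | nil => simp [maxPrefixSum_nonneg]
  | cons a s ih => simp only [List.cons_append, maxPrefixSum, ih, List.sum_cons]; omega

lemma maxPrefixSum_replicate_one_append (k : ℕ) (s : List ℤ) :
    maxPrefixSum (List.replicate k 1 ++ s) = k + maxPrefixSum s := by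
  induction k with
  | zero => simp
  | succ k ih =>
    simp only [List.replicate_succ, List.cons_append, maxPrefixSum, ih]
    have := maxPrefixSum_nonneg s
    omega

lemma maxPrefixSum_replicate_neg_one (k : ℕ) : maxPrefixSum (List.replicate k (-1)) = 0 := by
  induction k with
  | zero => rfl
  | succ k ih => simp [List.replicate_succ, ih]

lemma sum_star (k : ℕ) : (_root_.star k).sum = 0 := by
  simp [_root_.star, List.sum_replicate]

lemma maxPrefixSum_star (k : ℕ) : maxPrefixSum (_root_.star k) = k := by
  simp [_root_.star, maxPrefixSum_replicate_one_append, maxPrefixSum_replicate_neg_one]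

lemma sum_flatten_map_star (ks : List ℕ) : (ks.map _root_.star).flatten.sum = 0 := by
  simp [List.sum_flatten, Function.comp_def, sum_star]

lemma maxPrefixSum_flatten_map_star_le {ks : List ℕ} {D : ℕ} (h : ∀ k ∈ ks, k ≤ D) :
    maxPrefixSum (ks.map _root_.star).flatten ≤ D := by
  induction ks with
  | nil => simp
  | cons k ks ih =>
    simp only [List.mem_cons, forall_eq_or_imp] at h
    simp only [List.map_cons, List.flatten_cons, maxPrefixSum_append, maxPrefixSum_star, sum_star,
      zero_add, max_le_iff]
    exact ⟨by exact_mod_cast h.1, ih h.2⟩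

section StarNormalForm

variable {α : Type*} (o c : α)

def nest (k : ℕ) (l : α) : List α := List.replicate k o ++ l :: List.replicate k c

variable {o c} in
lemma prod_map_nest {M : Type*} [Monoid M] (u : Mˣ) (f : α → M) (ho : f o = u)
    (hc : f c = ↑u⁻¹) (k : ℕ) (l : α) :
    ((nest o c k l).map f).prod = ↑(u ^ (k : ℤ)) * f l * ↑(u ^ (-(k : ℤ))) := by
  simp [nest, ho, hc, mul_assoc]

variable [DecidableEq α]

def bracketWeight (l : α) : ℤ := if l = o then 1 else if l = c then -1 else 0

-- `n.toNat` is the height only when `n ≥ 0`, which `HeightsNonneg` guarantees.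
def starNormalForm : ℤ → List α → List α
  | _, [] => []
  | n, l :: L =>
    if bracketWeight o c l = 0 then nest o c n.toNat l ++ starNormalForm n L
    else starNormalForm (n + bracketWeight o c l) L

def starDepths : ℤ → List α → List ℕ
  | _, [] => []
  | n, l :: L =>
    if bracketWeight o c l = 0 then n.toNat :: starDepths n L
    else starDepths (n + bracketWeight o c l) L

def HeightsNonneg (n : ℤ) (L : List α) : Prop :=
  ∀ p, p <+: L → 0 ≤ n + (p.map (bracketWeight o c)).sum

variable {o c}

lemma HeightsNonneg.nonneg {n : ℤ} {L : List α} (h : HeightsNonneg o c n L) : 0 ≤ n := by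
  simpa using h [] List.nil_prefix

lemma HeightsNonneg.tail {n : ℤ} {l : α} {L : List α} (h : HeightsNonneg o c n (l :: L)) :
    HeightsNonneg o c (n + bracketWeight o c l) L := fun p hp => by
  simpa [add_assoc] using h (l :: p) (List.cons_prefix_cons.mpr ⟨rfl, hp⟩)

lemma mem_starNormalForm {n : ℤ} {L : List α} {l : α} (hl : l ∈ starNormalForm o c n L) :
    l ∈ L ∨ l = o ∨ l = c := by
  induction L generalizing n with
  | nil => simp [starNormalForm] at hl
  | cons a L ih =>
    by_cases ha : bracketWeight o c a = 0
    · simp only [starNormalForm, ha, if_true, nest, List.mem_append, List.mem_cons,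
        List.mem_replicate] at hl
      rcases hl with (⟨-, rfl⟩ | rfl | ⟨-, rfl⟩) | hl
      · exact Or.inr (Or.inl rfl)
      · exact Or.inl List.mem_cons_self
      · exact Or.inr (Or.inr rfl)
      · exact (ih hl).imp_left (List.mem_cons_of_mem a)
    · simp only [starNormalForm, ha, if_false] at hl
      exact (ih hl).imp_left (List.mem_cons_of_mem a)

@[simp]
lemma bracketWeight_left : bracketWeight o c o = 1 := if_pos rfl

@[simp]
lemma bracketWeight_right (hoc : o ≠ c) : bracketWeight o c c = -1 := by
  simp [bracketWeight, hoc.symm]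

lemma map_bracketWeight_nest (hoc : o ≠ c) (k : ℕ) {l : α} (hl : bracketWeight o c l = 0) :
    (nest o c k l).map (bracketWeight o c) = _root_.star k := by
  simp [nest, _root_.star, hl, hoc]

lemma map_bracketWeight_starNormalForm (hoc : o ≠ c) (n : ℤ) (L : List α) :
    (starNormalForm o c n L).map (bracketWeight o c)
      = ((starDepths o c n L).map _root_.star).flatten := by
  induction L generalizing n with
  | nil => simp [starNormalForm, starDepths]
  | cons l L ih =>
    by_cases hl : bracketWeight o c l = 0
    · simp [starNormalForm, starDepths, hl, map_bracketWeight_nest hoc, ih]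
    · simp [starNormalForm, starDepths, hl, ih]

lemma starDepths_le {n : ℤ} {L : List α} (hL : HeightsNonneg o c n L) :
    ∀ k ∈ starDepths o c n L, (k : ℤ) ≤ n + maxPrefixSum (L.map (bracketWeight o c)) := by
  induction L generalizing n with
  | nil => simp [starDepths]
  | cons l L ih =>
    have hn := hL.nonneg
    have htail := ih hL.tail
    by_cases hl : bracketWeight o c l = 0
    · rw [hl, add_zero] at htail
      simp only [starDepths, hl, if_true, List.mem_cons, forall_eq_or_imp, List.map_cons,
        maxPrefixSum, zero_add] at htail ⊢
      refine ⟨by have := maxPrefixSum_nonneg (L.map (bracketWeight o c)); omega, ?_⟩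
      intro k hk; have := htail k hk; omega
    · simp only [starDepths, hl, if_false, List.map_cons, maxPrefixSum]
      intro k hk; have := htail k hk; omega

variable {M : Type*} [Monoid M] (u : Mˣ) (f : α → M)

lemma apply_eq_zpow_bracketWeight (ho : f o = u) (hc : f c = ↑u⁻¹) {l : α}
    (hl : bracketWeight o c l ≠ 0) : f l = ↑(u ^ bracketWeight o c l) := by
  unfold bracketWeight at hl ⊢
  split_ifs at hl ⊢ with h₁ h₂
  · simp [h₁, ho]
  · simp [h₂, hc]
  · exact absurd rfl hl

theorem zpow_mul_prod_map (ho : f o = u) (hc : f c = ↑u⁻¹) {n : ℤ} {L : List α}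
    (hL : HeightsNonneg o c n L) :
    ↑(u ^ n) * (L.map f).prod
      = ((starNormalForm o c n L).map f).prod * ↑(u ^ (n + (L.map (bracketWeight o c)).sum)) := by
  induction L generalizing n with
  | nil => simp [starNormalForm]
  | cons l L ih =>
    have htail := ih hL.tail
    by_cases hl : bracketWeight o c l = 0
    · rw [hl, add_zero] at htail
      have hn : ((n.toNat : ℕ) : ℤ) = n := Int.toNat_of_nonneg hL.nonneg
      simp only [starNormalForm, hl, if_true, List.map_append, List.prod_append, List.map_cons,
        List.prod_cons, List.sum_cons, zero_add]
      rw [prod_map_nest u f ho hc, hn, mul_assoc, ← htail, zpow_neg]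
      simp only [mul_assoc, Units.inv_mul_cancel_left]
    · simp only [starNormalForm, hl, if_false, List.map_cons, List.prod_cons, List.sum_cons]
      rw [apply_eq_zpow_bracketWeight u f ho hc hl, ← mul_assoc, ← Units.val_mul, ← zpow_add,
        htail, add_assoc]

end StarNormalForm

section Letters

variable {i : ZMod 3} {w : Word}

lemma sub_one_ne_self (i : ZMod 3) : i - 1 ≠ i := by
  rw [Ne, sub_eq_self]; decide

lemma sub_one_ne_add_one (i : ZMod 3) : i - 1 ≠ i + 1 := by
  rw [Ne, sub_eq_iff_eq_add, add_assoc, left_eq_add]; decide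

lemma mu_eq_singleton (i : ZMod 3) (l : Letter) :
    mu i l = [bracketWeight (.b (i - 1)) (.d (i - 1)) l] := by
  cases l <;> simp only [mu, bracketWeight] <;> split_ifs <;> simp_all

lemma muList_eq_map (i : ZMod 3) (w : Word) :
    muList i w = (FreeMonoid.toList w).map (bracketWeight (.b (i - 1)) (.d (i - 1))) := by
  rw [muList]
  induction FreeMonoid.toList w with
  | nil => rfl
  | cons l L ih => simp [mu_eq_singleton, ih]

lemma depth_eq_maxPrefixSum (i : ZMod 3) (w : Word) : depth i w = maxPrefixSum (muList i w) := by
  rw [depth, foldr_max_map_sum_inits, max_eq_right (maxPrefixSum_nonneg _)]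

lemma sum_code_eq_bracketWeight {l : Letter}
    (hl : l ∈ ({Letter.a i, Letter.b i, Letter.c i, Letter.d i, Letter.x i,
      Letter.b (i-1), Letter.d (i-1)} : Set Letter)) :
    (code i l).sum = bracketWeight (.b (i - 1)) (.d (i - 1)) l := by
  have h₁ := sub_one_ne_self i
  have h₂ := sub_one_ne_add_one i
  simp only [Set.mem_insert_iff, Set.mem_singleton_iff] at hl
  rcases hl with rfl | rfl | rfl | rfl | rfl | rfl | rfl <;>
    simp [code, bracketWeight, h₁, h₁.symm, h₂]

lemma sum_brackets_eq (hw : OnSeven i w) :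
    (brackets i w).sum
      = ((FreeMonoid.toList w).map (bracketWeight (.b (i - 1)) (.d (i - 1)))).sum := by
  rw [brackets, List.sum_flatten, List.map_map]
  exact congrArg List.sum (List.map_congr_left fun l hl => sum_code_eq_bracketWeight (hw l hl))

lemma OnSeven.ofList_of_prefix (hw : OnSeven i w) {p : List Letter}
    (hp : p <+: FreeMonoid.toList w) : OnSeven i (FreeMonoid.ofList p) :=
  fun l hl => hw l (hp.subset hl)

lemma brackets_ofList_prefix {p : List Letter} (hp : p <+: FreeMonoid.toList w) :
    brackets i (FreeMonoid.ofList p) <+: brackets i w :=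
  (hp.map _).flatten

lemma IBalanced.heightsNonneg (hw : OnSeven i w) (hbal : IBalanced i w) :
    HeightsNonneg (.b (i - 1)) (.d (i - 1)) 0 (FreeMonoid.toList w) := fun p hp => by
  rw [zero_add, ← FreeMonoid.toList_ofList p, ← sum_brackets_eq (hw.ofList_of_prefix hp)]
  exact hbal.1 _ (brackets_ofList_prefix hp)

lemma IBalanced.sum_bracketWeight_eq_zero (hw : OnSeven i w) (hbal : IBalanced i w) :
    ((FreeMonoid.toList w).map (bracketWeight (.b (i - 1)) (.d (i - 1)))).sum = 0 := by
  rw [← sum_brackets_eq hw]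
  exact hbal.2

end Letters

section Presentation

lemma mk'_eq_of_skRel {u v : Word} (h : SKRel u v) : skCon.mk' u = skCon.mk' v :=
  skCon.eq.mpr (ConGen.Rel.of u v h)

def letterClass (l : Letter) : skCon.Quotient := skCon.mk' (FreeMonoid.of l)

lemma mk'_ofList (L : List Letter) :
    skCon.mk' (FreeMonoid.ofList L) = (L.map letterClass).prod := by
  rw [← FreeMonoid.lift_ofList, ← FreeMonoid.lift_restrict skCon.mk']
  rfl

lemma letterClass_b_mul_d (j : ZMod 3) : letterClass (.b j) * letterClass (.d j) = 1 :=
  (map_mul skCon.mk' _ _).symm.trans ((mk'_eq_of_skRel (SKRel.r4bd j)).trans (map_one _))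

lemma letterClass_d_mul_b (j : ZMod 3) : letterClass (.d j) * letterClass (.b j) = 1 :=
  (map_mul skCon.mk' _ _).symm.trans ((mk'_eq_of_skRel (SKRel.r4db j)).trans (map_one _))

def bracketUnit (i : ZMod 3) : skCon.Quotientˣ where
  val := letterClass (.b (i - 1))
  inv := letterClass (.d (i - 1))
  val_inv := letterClass_b_mul_d _
  inv_val := letterClass_d_mul_b _

def padding (i : ZMod 3) (k : ℕ) : List Letter :=
  nest (.b (i - 1)) (.d (i - 1)) k (.b i) ++ nest (.b (i - 1)) (.d (i - 1)) k (.d i)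

lemma mk'_ofList_padding (i : ZMod 3) (k : ℕ) :
    skCon.mk' (FreeMonoid.ofList (padding i k)) = 1 := by
  rw [mk'_ofList, padding, List.map_append, List.prod_append,
    prod_map_nest (bracketUnit i) letterClass rfl rfl,
    prod_map_nest (bracketUnit i) letterClass rfl rfl, zpow_neg]
  simp only [mul_assoc, Units.inv_mul_cancel_left]
  rw [← mul_assoc (letterClass _), letterClass_b_mul_d, one_mul, Units.mul_inv]

end Presentation

section StarForm

variable {i : ZMod 3} {w : Word}

def starForm (i : ZMod 3) (w : Word) : Word :=
  FreeMonoid.ofList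
    (starNormalForm (.b (i - 1)) (.d (i - 1)) 0 (FreeMonoid.toList w) ++
      padding i (depth i w).toNat)

lemma skCon_starForm (hw : OnSeven i w) (hbal : IBalanced i w) : skCon w (starForm i w) := by
  have h := zpow_mul_prod_map (bracketUnit i) letterClass rfl rfl (hbal.heightsNonneg hw)
  rw [hbal.sum_bracketWeight_eq_zero hw, zpow_zero, add_zero, zpow_zero, Units.val_one, one_mul,
    mul_one, ← mk'_ofList, ← mk'_ofList, FreeMonoid.ofList_toList] at h
  refine skCon.eq.mp ?_
  change skCon.mk' w = skCon.mk' (starForm i w)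
  rw [starForm, FreeMonoid.ofList_append, map_mul, mk'_ofList_padding, mul_one, h]

lemma onSeven_starForm (hw : OnSeven i w) : OnSeven i (starForm i w) := by
  intro l hl
  simp only [starForm, FreeMonoid.toList_ofList, List.mem_append] at hl
  rcases hl with hl | hl
  · rcases mem_starNormalForm hl with hl | rfl | rfl
    · exact hw l hl
    all_goals simp
  · simp only [padding, nest, List.mem_append, List.mem_cons, List.mem_replicate] at hl
    rcases hl with (⟨-, rfl⟩ | rfl | ⟨-, rfl⟩) | (⟨-, rfl⟩ | rfl | ⟨-, rfl⟩) <;>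
      simp

lemma muList_starForm (i : ZMod 3) (w : Word) :
    muList i (starForm i w) =
      ((starDepths (.b (i - 1)) (.d (i - 1)) 0 (FreeMonoid.toList w) ++
        [(depth i w).toNat, (depth i w).toNat]).map _root_.star).flatten := by
  have hoc : Letter.b (i - 1) ≠ Letter.d (i - 1) := by simp
  have hb : bracketWeight (Letter.b (i - 1)) (.d (i - 1)) (.b i) = 0 := by
    simp [bracketWeight, (sub_one_ne_self i).symm]
  have hd : bracketWeight (Letter.b (i - 1)) (.d (i - 1)) (.d i) = 0 := by
    simp [bracketWeight, (sub_one_ne_self i).symm]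
  rw [muList_eq_map, starForm, FreeMonoid.toList_ofList, List.map_append,
    map_bracketWeight_starNormalForm hoc, padding, List.map_append,
    map_bracketWeight_nest hoc _ hb, map_bracketWeight_nest hoc _ hd]
  simp

lemma depth_starForm (hw : OnSeven i w) (hbal : IBalanced i w) :
    depth i (starForm i w) = depth i w := by
  have hD : ((depth i w).toNat : ℤ) = depth i w :=
    Int.toNat_of_nonneg (depth_eq_maxPrefixSum i w ▸ maxPrefixSum_nonneg _)
  have hK : ∀ k ∈ starDepths (.b (i - 1)) (.d (i - 1)) 0 (FreeMonoid.toList w),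
      k ≤ (depth i w).toNat := fun k hk => by
    have := starDepths_le (hbal.heightsNonneg hw) k hk
    rw [zero_add, ← muList_eq_map, ← depth_eq_maxPrefixSum] at this
    omega
  have hpad : maxPrefixSum ([(depth i w).toNat, (depth i w).toNat].map _root_.star).flatten
      = depth i w := by
    simp [maxPrefixSum_append, maxPrefixSum_star, sum_star, hD]
  rw [depth_eq_maxPrefixSum, muList_starForm, List.map_append, List.flatten_append,
    maxPrefixSum_append, sum_flatten_map_star, zero_add, hpad, max_eq_right]
  exact hD ▸ maxPrefixSum_flatten_map_star_le hK

end StarForm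

/-- Claim 3: every i-balanced word on the seven letters
a_i, b_i, c_i, d_i, x_i, b_{i-1}, d_{i-1} is equivalent to a star decomposable
word on the same seven letters of the same depth. -/
theorem claim3 (i : ZMod 3) : ∀ w : Word, OnSeven i w → IBalanced i w →
    ∃ w' : Word, skCon w w' ∧ OnSeven i w' ∧ StarDecomposable i w' ∧
      depth i w' = depth i w :=
  fun w hw hbal => ⟨starForm i w, skCon_starForm hw hbal, onSeven_starForm hw,
    ⟨_, muList_starForm i w⟩, depth_starForm hw hbal⟩
end
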